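/- arXiv:1710.11245 — 4 statements merged into one kernel-verified Lean document; each statement's English description precedes it below -/
import Mathlib

section
/- Let n≥4 be even, 3≤m≤n, and let σ be the reflection x ↦ n+2-x (mod n). The number of good binary n-tuples with exactly m ones fixed by σ equals binom(n/2, m/2) - 2·binom(⌊n/4⌋, m/2) if m is even, and 2·binom(n/2 - 1, ⌊m/2⌋) - 2·binom(⌊n/4⌋, ⌊m/2⌋) if m is odd. -/
/-- A binary `n`-tuple (a function `ZMod n → Bool`) is *good* if it is not identically
false and every cyclic gap between consecutive `true` positions is strictly less than
`n/2` (equivalently, every maximal cyclic block of zeros is short enough). -/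
def GoodFun (n : ℕ) (a : ZMod n → Bool) : Prop :=
  (∃ i, a i = true) ∧
    ∀ i, a i = true → ∃ k : ℕ, 0 < k ∧ 2 * k < n ∧ a (i + (k : ZMod n)) = true

/-- The number of ones of a binary `n`-tuple. -/
noncomputable def onesCount (n : ℕ) (a : ZMod n → Bool) : ℕ :=
  {i : ZMod n | a i = true}.ncard

lemma zmod_nat_eq_iff (n x y : ℕ) : ((x : ZMod n) = (y : ZMod n)) ↔ x % n = y % n := by
  rw [ZMod.natCast_eq_natCast_iff]; rfl

lemma exists_offset {n : ℕ} [NeZero n] (i : ZMod n) (b : ℕ) :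
    ∃ j, j < n ∧ i = ((b + j : ℕ) : ZMod n) := by
  refine ⟨(i - b).val, ZMod.val_lt _, ?_⟩
  push_cast [ZMod.natCast_zmod_val]
  ring

lemma cast_sub' (n x y : ℕ) (h : y ≤ n) :
    ((x : ZMod n) - (y : ℕ)) = ((x + (n - y) : ℕ) : ZMod n) := by
  push_cast [Nat.cast_sub h, ZMod.natCast_self]
  ring

lemma modeq_eq {n x y : ℕ} (h : (x : ZMod n) = (y : ZMod n)) (hy : y ≤ x) (hlt : x - y < n) :
    x = y := by
  have h1 : y ≡ x [MOD n] := ((ZMod.natCast_eq_natCast_iff _ _ _).1 h).symm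
  have hd : n ∣ x - y := (Nat.modEq_iff_dvd' hy).1 h1
  have := Nat.eq_zero_of_dvd_of_lt hd
  omega

lemma modeq_cases {n x y : ℕ} (h : (x : ZMod n) = (y : ZMod n)) (hy : y ≤ x)
    (hlt : x - y < 2 * n) : x = y ∨ x = y + n := by
  have h1 : y ≡ x [MOD n] := ((ZMod.natCast_eq_natCast_iff _ _ _).1 h).symm
  have hd : n ∣ x - y := (Nat.modEq_iff_dvd' hy).1 h1
  rcases hd with ⟨t, ht⟩
  have ht2 : t ≤ 1 := by
    by_contra hc
    push_neg at hc
    have : n * 2 ≤ n * t := Nat.mul_le_mul_left n hc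
    omega
  interval_cases t <;> omega

lemma zmod_eq_of {n x y : ℕ} (h : x = y ∨ x + n = y ∨ x = y + n ∨ x = y + 2 * n) :
    (x : ZMod n) = (y : ZMod n) := by
  rcases h with h | h | h | h
  · rw [h]
  · rw [← h]; push_cast [ZMod.natCast_self]; ring
  · rw [h]; push_cast [ZMod.natCast_self]; ring
  · rw [h]; push_cast [ZMod.natCast_self]; ring

/-- The set of pair-indices of a symmetric tuple. -/
def Jset (n N : ℕ) (a : ZMod n → Bool) : Finset ℕ :=
  (Finset.Icc 1 (N - 1)).filter (fun j => a ((1 + j : ℕ) : ZMod n) = true)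

lemma pair_sym {n : ℕ} {a : ZMod n → Bool} (hsym : ∀ i, a (2 - i) = a i) {j : ℕ}
    (hj : j ≤ n) : a ((1 + (n - j) : ℕ) : ZMod n) = a ((1 + j : ℕ) : ZMod n) := by
  have key : ((1 + (n - j) : ℕ) : ZMod n) = 2 - ((1 + j : ℕ) : ZMod n) := by
    have : ((1 + (n - j) : ℕ) : ZMod n) + ((1 + j : ℕ) : ZMod n) = ((2 + n : ℕ) : ZMod n) := by
      rw [← Nat.cast_add]
      congr 1
      omega
    have h2 : ((2 + n : ℕ) : ZMod n) = 2 := by push_cast [ZMod.natCast_self]; ring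
    rw [h2] at this
    linear_combination this
  rw [key]
  have := hsym (((1 + j : ℕ) : ZMod n))
  simpa using this

lemma offset_inj {n : ℕ} {e e' : ℕ} (he : e < n) (he' : e' < n)
    (h : ((1 + e : ℕ) : ZMod n) = ((1 + e' : ℕ) : ZMod n)) : e = e' := by
  rcases le_total e e' with hle | hle
  · have := modeq_eq h.symm (by omega) (by omega); omega
  · have := modeq_eq h (by omega) (by omega); omega

lemma onesCount_eq {n N : ℕ} (hn : n = 2 * N) (hN : 2 ≤ N) (a : ZMod n → Bool)
    (hsym : ∀ i, a (2 - i) = a i) :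
    onesCount n a = (cond (a ((1 : ℕ) : ZMod n)) 1 0) + (cond (a ((1 + N : ℕ) : ZMod n)) 1 0)
      + 2 * (Jset n N a).card := by
  haveI : NeZero n := ⟨by omega⟩
  classical
  have hone : onesCount n a = (Finset.univ.filter (fun i => a i = true)).card := by
    rw [onesCount, Set.ncard_eq_toFinset_card']
    congr 1
    ext i
    simp
  set c1 : ZMod n := ((1 : ℕ) : ZMod n) with hc1
  set cN : ZMod n := ((1 + N : ℕ) : ZMod n) with hcN
  set J := Jset n N a with hJdef
  have memJ : ∀ j, j ∈ J ↔ (1 ≤ j ∧ j ≤ N - 1 ∧ a ((1 + j : ℕ) : ZMod n) = true) := by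
    intro j
    simp [hJdef, Jset, Finset.mem_filter, Finset.mem_Icc, and_assoc]
  set A : Finset (ZMod n) := if a c1 = true then {c1} else ∅ with hA
  set B : Finset (ZMod n) := if a cN = true then {cN} else ∅ with hB
  set C : Finset (ZMod n) := J.image (fun j => ((1 + j : ℕ) : ZMod n)) with hC
  set D : Finset (ZMod n) := J.image (fun j => ((1 + (n - j) : ℕ) : ZMod n)) with hD
  have memA : ∀ i, i ∈ A ↔ (a c1 = true ∧ i = c1) := by
    intro i
    by_cases h : a c1 = true <;> simp [hA, h]
  have memB : ∀ i, i ∈ B ↔ (a cN = true ∧ i = cN) := by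
    intro i
    by_cases h : a cN = true <;> simp [hB, h]
  have memC : ∀ i, i ∈ C ↔ ∃ j ∈ J, ((1 + j : ℕ) : ZMod n) = i := by
    intro i; simp [hC]
  have memD : ∀ i, i ∈ D ↔ ∃ j ∈ J, ((1 + (n - j) : ℕ) : ZMod n) = i := by
    intro i; simp [hD]
  have cover : Finset.univ.filter (fun i => a i = true) = A ∪ B ∪ C ∪ D := by
    ext i
    simp only [Finset.mem_union, Finset.mem_filter, Finset.mem_univ, true_and]
    constructor
    · intro hai
      obtain ⟨j, hjlt, rfl⟩ := exists_offset i 1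
      rcases Nat.lt_or_ge j (N + 1) with hj1 | hj1
      · rcases Nat.eq_zero_or_pos j with rfl | hj0
        · left; left; left
          rw [memA]
          exact ⟨hai, rfl⟩
        · rcases eq_or_ne j N with rfl | hjN
          · left; left; right
            rw [memB]
            exact ⟨hai, rfl⟩
          · left; right
            rw [memC]
            exact ⟨j, (memJ j).2 ⟨hj0, by omega, hai⟩, rfl⟩
      · right
        rw [memD]
        refine ⟨n - j, (memJ _).2 ⟨by omega, by omega, ?_⟩, ?_⟩
        · have := pair_sym hsym (j := j) (by omega)
          rw [this]
          exact hai
        · congr 1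
          omega
    · intro hi
      rcases hi with ((hi | hi) | hi) | hi
      · rw [memA] at hi; rcases hi with ⟨h1, rfl⟩; exact h1
      · rw [memB] at hi; rcases hi with ⟨h1, rfl⟩; exact h1
      · rw [memC] at hi
        rcases hi with ⟨j, hj, rfl⟩
        exact ((memJ j).1 hj).2.2
      · rw [memD] at hi
        rcases hi with ⟨j, hj, rfl⟩
        obtain ⟨hj1, hj2, hj3⟩ := (memJ j).1 hj
        rw [pair_sym hsym (by omega)]
        exact hj3
  have dAB : Disjoint A B := by
    rw [Finset.disjoint_left]
    intro i hiA hiB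
    rw [memA] at hiA; rw [memB] at hiB
    have e : ((1 + 0 : ℕ) : ZMod n) = ((1 + N : ℕ) : ZMod n) := hiA.2.symm.trans hiB.2
    have := offset_inj (n := n) (by omega) (by omega) e
    omega
  have dAC : Disjoint A C := by
    rw [Finset.disjoint_left]
    intro i hiA hiC
    rw [memA] at hiA; rw [memC] at hiC
    obtain ⟨j, hj, hj2⟩ := hiC
    obtain ⟨hj1, hjN, _⟩ := (memJ j).1 hj
    have e : ((1 + j : ℕ) : ZMod n) = ((1 + 0 : ℕ) : ZMod n) := hj2.trans hiA.2
    have := offset_inj (n := n) (by omega) (by omega) e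
    omega
  have dAD : Disjoint A D := by
    rw [Finset.disjoint_left]
    intro i hiA hiD
    rw [memA] at hiA; rw [memD] at hiD
    obtain ⟨j, hj, hj2⟩ := hiD
    obtain ⟨hj1, hjN, _⟩ := (memJ j).1 hj
    have e : ((1 + (n - j) : ℕ) : ZMod n) = ((1 + 0 : ℕ) : ZMod n) := hj2.trans hiA.2
    have := offset_inj (n := n) (by omega) (by omega) e
    omega
  have dBC : Disjoint B C := by
    rw [Finset.disjoint_left]
    intro i hiB hiC
    rw [memB] at hiB; rw [memC] at hiC
    obtain ⟨j, hj, hj2⟩ := hiC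
    obtain ⟨hj1, hjN, _⟩ := (memJ j).1 hj
    have e : ((1 + j : ℕ) : ZMod n) = ((1 + N : ℕ) : ZMod n) := hj2.trans hiB.2
    have := offset_inj (n := n) (by omega) (by omega) e
    omega
  have dBD : Disjoint B D := by
    rw [Finset.disjoint_left]
    intro i hiB hiD
    rw [memB] at hiB; rw [memD] at hiD
    obtain ⟨j, hj, hj2⟩ := hiD
    obtain ⟨hj1, hjN, _⟩ := (memJ j).1 hj
    have e : ((1 + (n - j) : ℕ) : ZMod n) = ((1 + N : ℕ) : ZMod n) := hj2.trans hiB.2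
    have := offset_inj (n := n) (by omega) (by omega) e
    omega
  have dCD : Disjoint C D := by
    rw [Finset.disjoint_left]
    intro i hiC hiD
    rw [memC] at hiC; rw [memD] at hiD
    obtain ⟨j, hj, hj2⟩ := hiC
    obtain ⟨j', hj', hj2'⟩ := hiD
    obtain ⟨hj1, hjN, _⟩ := (memJ j).1 hj
    obtain ⟨hj1', hjN', _⟩ := (memJ j').1 hj'
    have e : ((1 + j : ℕ) : ZMod n) = ((1 + (n - j') : ℕ) : ZMod n) := hj2.trans hj2'.symm
    have := offset_inj (n := n) (by omega) (by omega) e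
    omega
  have cardA : A.card = cond (a c1) 1 0 := by
    by_cases h : a c1 = true <;> simp [hA, h]
  have cardB : B.card = cond (a cN) 1 0 := by
    by_cases h : a cN = true <;> simp [hB, h]
  have cardC : C.card = J.card := by
    rw [hC]
    apply Finset.card_image_of_injOn
    intro j hj j' hj' hjj
    obtain ⟨h1, h2, _⟩ := (memJ j).1 hj
    obtain ⟨h1', h2', _⟩ := (memJ j').1 hj'
    exact offset_inj (by omega) (by omega) hjj
  have cardD : D.card = J.card := by
    rw [hD]
    apply Finset.card_image_of_injOn
    intro j hj j' hj' hjj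
    obtain ⟨h1, h2, _⟩ := (memJ j).1 hj
    obtain ⟨h1', h2', _⟩ := (memJ j').1 hj'
    have := offset_inj (n := n) (by omega) (by omega) hjj
    omega
  rw [hone, cover]
  rw [Finset.card_union_of_disjoint (by
    refine Finset.disjoint_union_left.2 ⟨Finset.disjoint_union_left.2 ⟨dAD, dBD⟩, dCD⟩)]
  rw [Finset.card_union_of_disjoint (by
    refine Finset.disjoint_union_left.2 ⟨dAC, dBC⟩)]
  rw [Finset.card_union_of_disjoint dAB]
  rw [cardA, cardB, cardC, cardD]
  omega

lemma arc_of_notgood {n N : ℕ} (hn : n = 2 * N) (hN : 2 ≤ N) (a : ZMod n → Bool)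
    (hsym : ∀ i, a (2 - i) = a i) (hm : 3 ≤ onesCount n a) (hbad : ¬ GoodFun n a) :
    ∃ c' : ℕ, (c' = 1 ∨ c' = 1 + N) ∧
      ∀ i, a i = true → ∃ s : ℕ, s ≤ 2 * (N / 2) ∧
        i = ((c' + (n - N / 2) + s : ℕ) : ZMod n) := by
  haveI : NeZero n := ⟨by omega⟩
  classical
  set T := N / 2 with hT
  -- there is at least one true position
  have hpos : {i : ZMod n | a i = true}.Nonempty := by
    rw [Set.nonempty_iff_ne_empty]
    intro h
    rw [onesCount, h, Set.ncard_empty] at hm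
    omega
  obtain ⟨iw, hiw⟩ := hpos
  have hA : ∃ i, a i = true := ⟨iw, hiw⟩
  have hB : ¬ ∀ i, a i = true → ∃ k : ℕ, 0 < k ∧ 2 * k < n ∧ a (i + (k : ZMod n)) = true :=
    fun h => hbad ⟨hA, h⟩
  push_neg at hB
  obtain ⟨i0, hi0, hgap⟩ := hB
  -- decomposition of arbitrary elements
  have hdec : ∀ i : ZMod n, ∃ k, k < n ∧ i = i0 + ((k : ℕ) : ZMod n) := by
    intro i
    refine ⟨(i - i0).val, ZMod.val_lt _, ?_⟩
    rw [ZMod.natCast_zmod_val]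
    ring
  have claim1 : ∀ i : ZMod n, a i = true → ∃ r, r ≤ N ∧ i = i0 - ((r : ℕ) : ZMod n) := by
    intro i hi
    obtain ⟨k, hk, rfl⟩ := hdec i
    rcases Nat.eq_zero_or_pos k with rfl | hk0
    · exact ⟨0, by omega, by push_cast; ring⟩
    · rcases Nat.lt_or_ge k N with hkN | hkN
      · exact absurd hi (by simpa using hgap k hk0 (by omega))
      · refine ⟨n - k, by omega, ?_⟩
        have : ((n - k : ℕ) : ZMod n) = -((k : ℕ) : ZMod n) := by
          push_cast [Nat.cast_sub hk.le, ZMod.natCast_self]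
          ring
        rw [this]
        ring
  set D := (Finset.range (N + 1)).filter (fun r => a (i0 - ((r : ℕ) : ZMod n)) = true)
    with hD
  have h0D : 0 ∈ D := by
    simp only [hD, Finset.mem_filter, Finset.mem_range]
    constructor
    · omega
    · push_cast
      simpa using hi0
  have hDne : D.Nonempty := ⟨0, h0D⟩
  set u := D.max' hDne with hu
  have huD : u ∈ D := D.max'_mem hDne
  have huN : u ≤ N := by
    have := (Finset.mem_filter.1 huD).1
    simp only [Finset.mem_range] at this
    omega
  have hau : a (i0 - ((u : ℕ) : ZMod n)) = true := (Finset.mem_filter.1 huD).2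
  have hDall : ∀ i : ZMod n, a i = true → ∃ r, r ≤ u ∧ i = i0 - ((r : ℕ) : ZMod n) := by
    intro i hi
    obtain ⟨r, hrN, hri⟩ := claim1 i hi
    have hrD : r ∈ D := by
      simp only [hD, Finset.mem_filter, Finset.mem_range]
      exact ⟨by omega, by rw [← hri]; exact hi⟩
    exact ⟨r, D.le_max' r hrD, hri⟩
  -- reflection relations
  obtain ⟨r1, hr1u, h1⟩ := hDall (2 - i0) (by rw [hsym]; exact hi0)
  obtain ⟨r0, hr0u, h0⟩ := hDall (2 - (i0 - ((u : ℕ) : ZMod n))) (by rw [hsym]; exact hau)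
  have key : ((u + r0 : ℕ) : ZMod n) = ((r1 : ℕ) : ZMod n) := by
    push_cast
    linear_combination h0 - h1
  have hcases := modeq_cases key (by omega) (by omega)
  rcases hcases with hcA | hcB
  swap
  · -- degenerate case : u = N, r1 = 0, contradiction with 3 ≤ m
    exfalso
    have hr1 : r1 = 0 := by omega
    have huN' : u = N := by omega
    rw [hr1] at h1
    push_cast at h1
    rw [sub_zero] at h1
    -- h1 : 2 - i0 = i0
    have hDsmall : ∀ r ∈ D, r = 0 ∨ r = N := by
      intro r hr
      by_contra hcon
      push_neg at hcon
      obtain ⟨hr0', hrN'⟩ := hcon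
      have hrmem := Finset.mem_filter.1 hr
      simp only [Finset.mem_range] at hrmem
      have hrlt : r < N := by omega
      have hrpos : 0 < r := by omega
      have har : a (i0 + ((r : ℕ) : ZMod n)) = true := by
        have h2 := hsym (i0 - ((r : ℕ) : ZMod n))
        rw [hrmem.2] at h2
        have h3 : 2 - (i0 - ((r : ℕ) : ZMod n)) = i0 + ((r : ℕ) : ZMod n) := by
          linear_combination h1
        rw [h3] at h2
        exact h2
      exact absurd har (by simpa using hgap r hrpos (by omega))
    have hsub : {i : ZMod n | a i = true} ⊆ {i0, i0 - ((N : ℕ) : ZMod n)} := by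
      intro i hi
      obtain ⟨r, hru, hri⟩ := hDall i hi
      have hrD : r ∈ D := by
        simp only [hD, Finset.mem_filter, Finset.mem_range]
        exact ⟨by omega, by rw [← hri]; exact hi⟩
      rcases hDsmall r hrD with rfl | rfl
      · simp only [Set.mem_insert_iff]
        left
        rw [hri]
        push_cast
        ring
      · simp only [Set.mem_insert_iff, Set.mem_singleton_iff]
        right
        exact hri
    have hle : onesCount n a ≤ 2 := by
      rw [onesCount]
      refine le_trans (Set.ncard_le_ncard hsub (Set.toFinite _)) ?_
      refine le_trans (Set.ncard_insert_le _ _) ?_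
      simp
    omega
  · -- main case : r0 = 0, r1 = u
    have hr0 : r0 = 0 := by omega
    have hr1 : r1 = u := by omega
    rw [hr1] at h1
    -- h1 : 2 - i0 = i0 - u
    obtain ⟨w, hwlt, hw⟩ := exists_offset i0 1
    have keyu : ((2 * w : ℕ) : ZMod n) = ((u : ℕ) : ZMod n) := by
      rw [hw] at h1
      push_cast at h1 ⊢
      linear_combination -h1
    have hueven : u = 2 * w ∨ 2 * w = u + n := by
      rcases le_total u (2 * w) with hle | hle
      · rcases modeq_cases keyu hle (by omega) with h | h
        · left; omega
        · right; omega
      · left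
        exact modeq_eq keyu.symm hle (by omega)
    set t := u / 2 with ht
    have htT : t ≤ T := by
      rw [ht, hT]
      exact Nat.div_le_div_right huN
    have hc' : ∃ c', (c' = 1 ∨ c' = 1 + N) ∧ 1 + w = c' + t := by
      rcases hueven with h | h
      · exact ⟨1, Or.inl rfl, by omega⟩
      · exact ⟨1 + N, Or.inr rfl, by omega⟩
    obtain ⟨c', hc'or, hc'eq⟩ := hc'
    refine ⟨c', hc'or, ?_⟩
    intro i hi
    obtain ⟨r, hru, hri⟩ := hDall i hi
    have hu2t : u = 2 * t := by omega
    refine ⟨T + t - r, by omega, ?_⟩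
    have e2 : ((c' + (n - T) + (T + t - r) + r : ℕ) : ZMod n) = ((c' + t : ℕ) : ZMod n) := by
      apply zmod_eq_of
      right; right; left
      have hTn : T ≤ n := by omega
      omega
    have e1 : ((c' + (n - T) + (T + t - r) : ℕ) : ZMod n)
        = ((c' + t : ℕ) : ZMod n) - ((r : ℕ) : ZMod n) := by
      rw [eq_sub_iff_add_eq, ← Nat.cast_add]
      exact e2
    rw [e1, ← hc'eq, ← hw]
    exact hri

lemma notgood_of_arc {n N : ℕ} (hn : n = 2 * N) (hN : 2 ≤ N) (a : ZMod n → Bool)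
    (hne : ∃ i, a i = true) (c' : ℕ)
    (harc : ∀ i, a i = true → ∃ s : ℕ, s ≤ 2 * (N / 2) ∧
      i = ((c' + (n - N / 2) + s : ℕ) : ZMod n)) :
    ¬ GoodFun n a := by
  haveI : NeZero n := ⟨by omega⟩
  classical
  set T := N / 2 with hT
  have hT2 : 2 * T ≤ N := by omega
  clear_value T
  have hTn : T ≤ N := by omega
  set Sm := (Finset.range (2 * T + 1)).filter
    (fun s => a ((c' + (n - T) + s : ℕ) : ZMod n) = true) with hSm
  have hSmne : Sm.Nonempty := by
    obtain ⟨i, hi⟩ := hne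
    obtain ⟨s, hs1, hs2⟩ := harc i hi
    exact ⟨s, by
      simp only [hSm, Finset.mem_filter, Finset.mem_range]
      exact ⟨by omega, by rw [← hs2]; exact hi⟩⟩
  set smax := Sm.max' hSmne with hsmax
  have hsmaxmem := Sm.max'_mem hSmne
  have hsmax2T : smax ≤ 2 * T := by
    have := (Finset.mem_filter.1 hsmaxmem).1
    simp only [Finset.mem_range] at this
    omega
  have hasmax : a ((c' + (n - T) + smax : ℕ) : ZMod n) = true := (Finset.mem_filter.1 hsmaxmem).2
  rintro ⟨-, hgood⟩
  obtain ⟨k, hk0, hkn, hk⟩ := hgood _ hasmax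
  rw [← Nat.cast_add] at hk
  obtain ⟨s', hs'1, hs'2⟩ := harc _ hk
  have hs'mem : s' ∈ Sm := by
    simp only [hSm, Finset.mem_filter, Finset.mem_range]
    exact ⟨by omega, by rw [← hs'2]; exact hk⟩
  have hs'le : s' ≤ smax := Sm.le_max' s' hs'mem
  have heq : c' + (n - T) + smax + k = c' + (n - T) + s' :=
    modeq_eq (n := n) hs'2 (by omega) (by omega)
  omega

lemma arc1_iff {n N : ℕ} (hn : n = 2 * N) (hN : 2 ≤ N) (a : ZMod n → Bool)
    (hsym : ∀ i, a (2 - i) = a i) :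
    (∀ i, a i = true → ∃ s : ℕ, s ≤ 2 * (N / 2) ∧
        i = ((1 + (n - N / 2) + s : ℕ) : ZMod n))
      ↔ (a ((1 + N : ℕ) : ZMod n) = false ∧ ∀ j ∈ Jset n N a, j ≤ N / 2) := by
  haveI : NeZero n := ⟨by omega⟩
  have hT2 : 2 * (N / 2) ≤ N := by omega
  set T := N / 2 with hT
  constructor
  · intro harc
    constructor
    · by_contra hcon
      rw [Bool.not_eq_false] at hcon
      obtain ⟨s, hs1, hs2⟩ := harc _ hcon
      have := modeq_eq (n := n) hs2.symm (by omega) (by omega)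
      omega
    · intro j hj
      obtain ⟨hj1, hj2, hj3⟩ : 1 ≤ j ∧ j ≤ N - 1 ∧ a ((1 + j : ℕ) : ZMod n) = true := by
        simpa [Jset, Finset.mem_filter, Finset.mem_Icc, and_assoc] using hj
      obtain ⟨s, hs1, hs2⟩ := harc _ hj3
      rcases modeq_cases (n := n) hs2.symm (by omega) (by omega) with h | h <;> omega
  · rintro ⟨hzero, hsmall⟩ i hi
    obtain ⟨j', hj'lt, rfl⟩ := exists_offset i 1
    have memJ : ∀ j : ℕ, 1 ≤ j → j ≤ N - 1 → a ((1 + j : ℕ) : ZMod n) = true →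
        j ∈ Jset n N a := by
      intro j h1 h2 h3
      simp only [Jset, Finset.mem_filter, Finset.mem_Icc]
      exact ⟨⟨h1, h2⟩, h3⟩
    rcases Nat.lt_or_ge j' (N + 1) with hj1 | hj1
    · rcases eq_or_ne j' N with rfl | hjN
      · rw [hi] at hzero; simp at hzero
      · have hj'T : j' ≤ T := by
          rcases Nat.eq_zero_or_pos j' with rfl | hj0
          · omega
          · exact hsmall j' (memJ j' hj0 (by omega) hi)
        exact ⟨T + j', by omega, zmod_eq_of (by omega)⟩
    · have hj'' : 1 ≤ n - j' ∧ n - j' ≤ N - 1 := by omega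
      have ha'' : a ((1 + (n - j') : ℕ) : ZMod n) = true := by
        rw [pair_sym hsym (j := j') (by omega)]
        exact hi
      have hj''T : n - j' ≤ T := hsmall _ (memJ _ hj''.1 hj''.2 ha'')
      exact ⟨T - (n - j'), by omega, zmod_eq_of (by omega)⟩

lemma arcN_iff {n N : ℕ} (hn : n = 2 * N) (hN : 2 ≤ N) (a : ZMod n → Bool)
    (hsym : ∀ i, a (2 - i) = a i) :
    (∀ i, a i = true → ∃ s : ℕ, s ≤ 2 * (N / 2) ∧
        i = (((1 + N) + (n - N / 2) + s : ℕ) : ZMod n))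
      ↔ (a ((1 : ℕ) : ZMod n) = false ∧ ∀ j ∈ Jset n N a, N - N / 2 ≤ j) := by
  haveI : NeZero n := ⟨by omega⟩
  have hT2 : 2 * (N / 2) ≤ N := by omega
  set T := N / 2 with hT
  constructor
  · intro harc
    constructor
    · by_contra hcon
      rw [Bool.not_eq_false] at hcon
      obtain ⟨s, hs1, hs2⟩ := harc _ hcon
      rcases modeq_cases (n := n) hs2.symm (by omega) (by omega) with h | h <;> omega
    · intro j hj
      obtain ⟨hj1, hj2, hj3⟩ : 1 ≤ j ∧ j ≤ N - 1 ∧ a ((1 + j : ℕ) : ZMod n) = true := by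
        simpa [Jset, Finset.mem_filter, Finset.mem_Icc, and_assoc] using hj
      obtain ⟨s, hs1, hs2⟩ := harc _ hj3
      rcases modeq_cases (n := n) hs2.symm (by omega) (by omega) with h | h <;> omega
  · rintro ⟨hzero, hsmall⟩ i hi
    obtain ⟨j', hj'lt, rfl⟩ := exists_offset i 1
    have memJ : ∀ j : ℕ, 1 ≤ j → j ≤ N - 1 → a ((1 + j : ℕ) : ZMod n) = true →
        j ∈ Jset n N a := by
      intro j h1 h2 h3
      simp only [Jset, Finset.mem_filter, Finset.mem_Icc]
      exact ⟨⟨h1, h2⟩, h3⟩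
    rcases Nat.lt_or_ge j' (N + 1) with hj1 | hj1
    · rcases eq_or_ne j' N with rfl | hjN
      · exact ⟨T, by omega, zmod_eq_of (by omega)⟩
      · rcases Nat.eq_zero_or_pos j' with rfl | hj0
        · rw [hi] at hzero; simp at hzero
        · have hj'T : N - T ≤ j' := hsmall j' (memJ j' hj0 (by omega) hi)
          exact ⟨j' + T - N, by omega, zmod_eq_of (by omega)⟩
    · have hj'' : 1 ≤ n - j' ∧ n - j' ≤ N - 1 := by omega
      have ha'' : a ((1 + (n - j') : ℕ) : ZMod n) = true := by
        rw [pair_sym hsym (j := j') (by omega)]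
        exact hi
      have hj''T : N - T ≤ n - j' := hsmall _ (memJ _ hj''.1 hj''.2 ha'')
      exact ⟨T + N - (n - j'), by omega, zmod_eq_of (by omega)⟩

lemma refl_cast {n : ℕ} {j : ℕ} (hj : j ≤ n) :
    (2 : ZMod n) - ((1 + j : ℕ) : ZMod n) = ((1 + (n - j) : ℕ) : ZMod n) := by
  have h : ((1 + (n - j) : ℕ) : ZMod n) + ((1 + j : ℕ) : ZMod n) = ((2 + n : ℕ) : ZMod n) := by
    rw [← Nat.cast_add]
    congr 1
    omega
  have h2 : ((2 + n : ℕ) : ZMod n) = 2 := by push_cast [ZMod.natCast_self]; ring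
  rw [h2] at h
  linear_combination -h

def encFun (n N : ℕ) (x y : Bool) (J : Finset ℕ) : ZMod n → Bool :=
  fun i => if i = ((1 : ℕ) : ZMod n) then x else if i = ((1 + N : ℕ) : ZMod n) then y
    else if ∃ j ∈ J, i = ((1 + j : ℕ) : ZMod n) ∨ i = ((1 + (n - j) : ℕ) : ZMod n)
      then true else false

section EncLemmas

variable {n N : ℕ} (hn : n = 2 * N) (hN : 2 ≤ N) {x y : Bool} {J : Finset ℕ}
  (hJ : J ⊆ Finset.Icc 1 (N - 1))

include hn hN

set_option linter.unusedSectionVars false in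
lemma enc_one : encFun n N x y J ((1 : ℕ) : ZMod n) = x := by
  simp [encFun]

lemma enc_mid : encFun n N x y J ((1 + N : ℕ) : ZMod n) = y := by
  have h1 : ((1 + N : ℕ) : ZMod n) ≠ ((1 : ℕ) : ZMod n) := by
    intro h
    have := offset_inj (n := n) (e := N) (e' := 0) (by omega) (by omega) h
    omega
  rw [encFun, if_neg h1, if_pos rfl]

include hJ

lemma enc_lo {j : ℕ} (hj1 : 1 ≤ j) (hj2 : j ≤ N - 1) :
    encFun n N x y J ((1 + j : ℕ) : ZMod n) = true ↔ j ∈ J := by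
  have h1 : ((1 + j : ℕ) : ZMod n) ≠ ((1 : ℕ) : ZMod n) := by
    intro h
    have := offset_inj (n := n) (e := j) (e' := 0) (by omega) (by omega) h
    omega
  have h2 : ((1 + j : ℕ) : ZMod n) ≠ ((1 + N : ℕ) : ZMod n) := by
    intro h
    have := offset_inj (n := n) (e := j) (e' := N) (by omega) (by omega) h
    omega
  rw [encFun, if_neg h1, if_neg h2]
  constructor
  · intro h
    by_cases hex : ∃ j' ∈ J, ((1 + j : ℕ) : ZMod n) = ((1 + j' : ℕ) : ZMod n) ∨
        ((1 + j : ℕ) : ZMod n) = ((1 + (n - j') : ℕ) : ZMod n)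
    · obtain ⟨j', hj', hor⟩ := hex
      have hj'b := Finset.mem_Icc.1 (hJ hj')
      rcases hor with h' | h'
      · have := offset_inj (n := n) (e := j) (e' := j') (by omega) (by omega) h'
        exact this ▸ hj'
      · have := offset_inj (n := n) (e := j) (e' := n - j') (by omega) (by omega) h'
        omega
    · rw [if_neg hex] at h
      exact absurd h (by simp)
  · intro h
    rw [if_pos ⟨j, h, Or.inl rfl⟩]

lemma enc_hi {j : ℕ} (hj1 : N + 1 ≤ j) (hj2 : j ≤ n - 1) :
    encFun n N x y J ((1 + j : ℕ) : ZMod n) = true ↔ (n - j) ∈ J := by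
  have h1 : ((1 + j : ℕ) : ZMod n) ≠ ((1 : ℕ) : ZMod n) := by
    intro h
    have := offset_inj (n := n) (e := j) (e' := 0) (by omega) (by omega) h
    omega
  have h2 : ((1 + j : ℕ) : ZMod n) ≠ ((1 + N : ℕ) : ZMod n) := by
    intro h
    have := offset_inj (n := n) (e := j) (e' := N) (by omega) (by omega) h
    omega
  rw [encFun, if_neg h1, if_neg h2]
  constructor
  · intro h
    by_cases hex : ∃ j' ∈ J, ((1 + j : ℕ) : ZMod n) = ((1 + j' : ℕ) : ZMod n) ∨
        ((1 + j : ℕ) : ZMod n) = ((1 + (n - j') : ℕ) : ZMod n)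
    · obtain ⟨j', hj', hor⟩ := hex
      have hj'b := Finset.mem_Icc.1 (hJ hj')
      rcases hor with h' | h'
      · have := offset_inj (n := n) (e := j) (e' := j') (by omega) (by omega) h'
        omega
      · have := offset_inj (n := n) (e := j) (e' := n - j') (by omega) (by omega) h'
        have : n - j = j' := by omega
        rw [this]
        exact hj'
    · rw [if_neg hex] at h
      exact absurd h (by simp)
  · intro h
    have hcg : ((1 + j : ℕ) : ZMod n) = ((1 + (n - (n - j)) : ℕ) : ZMod n) := by
      congr 1
      omega
    rw [if_pos ⟨n - j, h, Or.inr hcg⟩]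

lemma enc_sym : ∀ i, encFun n N x y J (2 - i) = encFun n N x y J i := by
  haveI : NeZero n := ⟨by omega⟩
  intro i
  obtain ⟨j', hj'lt, rfl⟩ := exists_offset i 1
  rw [refl_cast (by omega)]
  rcases Nat.lt_or_ge j' (N + 1) with hj1 | hj1
  · rcases eq_or_ne j' N with hjN | hjN
    · rw [hjN, show n - N = N from by omega]
    · rcases Nat.eq_zero_or_pos j' with rfl | hj0
      · have : n - 0 = n := by omega
        rw [this]
        have e : ((1 + n : ℕ) : ZMod n) = ((1 + 0 : ℕ) : ZMod n) := zmod_eq_of (by omega)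
        rw [e]
      · have hlo := enc_lo hn hN hJ (x := x) (y := y) hj0 (by omega)
        have hhi := enc_hi hn hN hJ (x := x) (y := y) (j := n - j') (by omega) (by omega)
        have hnn : n - (n - j') = j' := by omega
        rw [hnn] at hhi
        rw [Bool.eq_iff_iff, hlo, hhi]
  · have hlo := enc_lo hn hN hJ (x := x) (y := y) (j := n - j') (by omega) (by omega)
    have hhi := enc_hi hn hN hJ (x := x) (y := y) (j := j') hj1 (by omega)
    rw [Bool.eq_iff_iff, hlo, hhi]

lemma enc_Jset : Jset n N (encFun n N x y J) = J := by
  ext j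
  simp only [Jset, Finset.mem_filter, Finset.mem_Icc]
  constructor
  · rintro ⟨⟨h1, h2⟩, h3⟩
    exact (enc_lo hn hN hJ h1 h2).1 h3
  · intro hj
    have hb := Finset.mem_Icc.1 (hJ hj)
    exact ⟨hb, (enc_lo hn hN hJ hb.1 hb.2).2 hj⟩

lemma enc_ones : onesCount n (encFun n N x y J)
    = (cond x 1 0) + (cond y 1 0) + 2 * J.card := by
  rw [onesCount_eq hn hN _ (enc_sym hn hN hJ), enc_one hn hN, enc_mid hn hN,
    enc_Jset hn hN hJ]

lemma enc_dec {a : ZMod n → Bool} (hsym : ∀ i, a (2 - i) = a i)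
    (hx : a ((1 : ℕ) : ZMod n) = x) (hy : a ((1 + N : ℕ) : ZMod n) = y)
    (hJa : J = Jset n N a) : encFun n N x y J = a := by
  haveI : NeZero n := ⟨by omega⟩
  funext i
  obtain ⟨j', hj'lt, rfl⟩ := exists_offset i 1
  rcases Nat.lt_or_ge j' (N + 1) with hj1 | hj1
  · rcases eq_or_ne j' N with rfl | hjN
    · rw [enc_mid hn hN, hy]
    · rcases Nat.eq_zero_or_pos j' with rfl | hj0
      · rw [show ((1 + 0 : ℕ) : ZMod n) = ((1 : ℕ) : ZMod n) from rfl, enc_one hn hN, hx]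
      · rw [Bool.eq_iff_iff, enc_lo hn hN hJ hj0 (by omega), hJa]
        simp only [Jset, Finset.mem_filter, Finset.mem_Icc]
        constructor
        · rintro ⟨-, h⟩; exact h
        · intro h; exact ⟨⟨hj0, by omega⟩, h⟩
  · rw [Bool.eq_iff_iff, enc_hi hn hN hJ hj1 (by omega), hJa]
    simp only [Jset, Finset.mem_filter, Finset.mem_Icc]
    have hps : a ((1 + (n - (n - j')) : ℕ) : ZMod n) = a ((1 + (n - j') : ℕ) : ZMod n) :=
      pair_sym hsym (by omega)
    have hnn : n - (n - j') = j' := by omega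
    rw [hnn] at hps
    constructor
    · rintro ⟨-, h⟩
      rw [hps]
      exact h
    · intro h
      exact ⟨⟨by omega, by omega⟩, by rw [← hps]; exact h⟩

end EncLemmas

lemma notgood_iff {n N : ℕ} (hn : n = 2 * N) (hN : 2 ≤ N) (a : ZMod n → Bool)
    (hsym : ∀ i, a (2 - i) = a i) (hm : 3 ≤ onesCount n a) :
    ¬ GoodFun n a ↔
      ((a ((1 + N : ℕ) : ZMod n) = false ∧ ∀ j ∈ Jset n N a, j ≤ N / 2) ∨
       (a ((1 : ℕ) : ZMod n) = false ∧ ∀ j ∈ Jset n N a, N - N / 2 ≤ j)) := by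
  haveI : NeZero n := ⟨by omega⟩
  have hne : ∃ i, a i = true := by
    by_contra hcon
    push_neg at hcon
    have : {i : ZMod n | a i = true} = ∅ := by
      ext i
      simp only [Set.mem_setOf_eq, Set.mem_empty_iff_false, iff_false]
      exact fun h => (hcon i) h
    rw [onesCount, this, Set.ncard_empty] at hm
    omega
  constructor
  · intro hbad
    obtain ⟨c', hc'or, harc⟩ := arc_of_notgood hn hN a hsym hm hbad
    rcases hc'or with rfl | rfl
    · left
      exact (arc1_iff hn hN a hsym).1 harc
    · right
      exact (arcN_iff hn hN a hsym).1 harc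
  · intro hcond
    rcases hcond with h | h
    · exact notgood_of_arc hn hN a hne 1 ((arc1_iff hn hN a hsym).2 h)
    · exact notgood_of_arc hn hN a hne (1 + N) ((arcN_iff hn hN a hsym).2 h)

open Classical in
lemma card_slice {n N : ℕ} [NeZero n] (hn : n = 2 * N) (hN : 2 ≤ N) (m : ℕ) (hm : 3 ≤ m)
    (x y : Bool) :
    (Finset.univ.filter (fun a : ZMod n → Bool =>
        (GoodFun n a ∧ onesCount n a = m ∧ ∀ i, a (2 - i) = a i) ∧
        a ((1 : ℕ) : ZMod n) = x ∧ a ((1 + N : ℕ) : ZMod n) = y)).card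
    = (((Finset.Icc 1 (N - 1)).powerset).filter (fun J =>
        (cond x 1 0) + (cond y 1 0) + 2 * J.card = m ∧
        ¬ ((y = false ∧ ∀ j ∈ J, j ≤ N / 2) ∨
           (x = false ∧ ∀ j ∈ J, N - N / 2 ≤ j)))).card := by
  apply Finset.card_nbij' (fun a => Jset n N a) (fun J => encFun n N x y J)
  · intro a ha
    simp only [Finset.mem_coe, Finset.mem_filter, Finset.mem_univ, true_and] at ha
    obtain ⟨⟨hg, hones, hsym⟩, hx, hy⟩ := ha
    simp only [Finset.mem_coe, Finset.mem_filter, Finset.mem_powerset]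
    refine ⟨Finset.filter_subset _ _, ?_, ?_⟩
    · rw [← hx, ← hy, ← onesCount_eq hn hN a hsym]
      exact hones
    · rw [← hx, ← hy]
      intro hcon
      exact ((notgood_iff hn hN a hsym (by omega)).2 hcon) hg
  · intro J hJ
    simp only [Finset.mem_coe, Finset.mem_filter, Finset.mem_powerset] at hJ
    obtain ⟨hJsub, hones, hnb⟩ := hJ
    simp only [Finset.mem_coe, Finset.mem_filter, Finset.mem_univ, true_and]
    have hsym := enc_sym hn hN hJsub (x := x) (y := y)
    have honesE : onesCount n (encFun n N x y J) = m := by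
      rw [enc_ones hn hN hJsub]
      exact hones
    refine ⟨⟨?_, honesE, hsym⟩, enc_one hn hN, enc_mid hn hN⟩
    by_contra hng
    have := (notgood_iff hn hN _ hsym (by omega)).1 hng
    rw [enc_one hn hN, enc_mid hn hN, enc_Jset hn hN hJsub] at this
    exact hnb this
  · intro a ha
    simp only [Finset.mem_coe, Finset.mem_filter, Finset.mem_univ, true_and] at ha
    obtain ⟨⟨hg, hones, hsym⟩, hx, hy⟩ := ha
    exact enc_dec hn hN (Finset.filter_subset _ _) hsym hx hy rfl
  · intro J hJ
    simp only [Finset.mem_coe, Finset.mem_filter, Finset.mem_powerset] at hJ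
    exact enc_Jset hn hN hJ.1

open Classical in
lemma countMismatch {N m : ℕ} (x y : Bool)
    (h : ∀ c : ℕ, cond x 1 0 + cond y 1 0 + 2 * c ≠ m) :
    (((Finset.Icc 1 (N - 1)).powerset).filter (fun J =>
        (cond x 1 0) + (cond y 1 0) + 2 * J.card = m ∧
        ¬ ((y = false ∧ ∀ j ∈ J, j ≤ N / 2) ∨
           (x = false ∧ ∀ j ∈ J, N - N / 2 ≤ j)))).card = 0 := by
  rw [Finset.card_eq_zero, Finset.filter_eq_empty_iff]
  rintro J - ⟨h1, -⟩
  exact h _ h1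

open Classical in
lemma countTT {N m k : ℕ} (hN : 2 ≤ N) (hk : m = 2 + 2 * k) :
    (((Finset.Icc 1 (N - 1)).powerset).filter (fun J =>
        (cond true 1 0) + (cond true 1 0) + 2 * J.card = m ∧
        ¬ (((true : Bool) = false ∧ ∀ j ∈ J, j ≤ N / 2) ∨
           ((true : Bool) = false ∧ ∀ j ∈ J, N - N / 2 ≤ j)))).card
      = (N - 1).choose k := by
  have hcong : ((Finset.Icc 1 (N - 1)).powerset).filter (fun J =>
        (cond true 1 0) + (cond true 1 0) + 2 * J.card = m ∧
        ¬ (((true : Bool) = false ∧ ∀ j ∈ J, j ≤ N / 2) ∨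
           ((true : Bool) = false ∧ ∀ j ∈ J, N - N / 2 ≤ j)))
      = ((Finset.Icc 1 (N - 1)).powerset).filter (fun J => J.card = k) := by
    ext J
    simp only [Finset.mem_filter, Finset.mem_powerset, cond_true]
    constructor
    · rintro ⟨hs, h1, -⟩
      exact ⟨hs, by omega⟩
    · rintro ⟨hs, h1⟩
      refine ⟨hs, by omega, by simp⟩
  rw [hcong, ← Finset.powersetCard_eq_filter, Finset.card_powersetCard, Nat.card_Icc,
    show N - 1 + 1 - 1 = N - 1 from by omega]

open Classical in
lemma countTF {N m k : ℕ} (hN : 2 ≤ N) (hk : m = 1 + 2 * k) :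
    (((Finset.Icc 1 (N - 1)).powerset).filter (fun J =>
        (cond true 1 0) + (cond false 1 0) + 2 * J.card = m ∧
        ¬ (((false : Bool) = false ∧ ∀ j ∈ J, j ≤ N / 2) ∨
           ((true : Bool) = false ∧ ∀ j ∈ J, N - N / 2 ≤ j)))).card
      + (N / 2).choose k = (N - 1).choose k := by
  set T := N / 2 with hT
  have hTle : T ≤ N - 1 := by omega
  have hcong : ((Finset.Icc 1 (N - 1)).powerset).filter (fun J =>
        (cond true 1 0) + (cond false 1 0) + 2 * J.card = m ∧
        ¬ (((false : Bool) = false ∧ ∀ j ∈ J, j ≤ N / 2) ∨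
           ((true : Bool) = false ∧ ∀ j ∈ J, N - N / 2 ≤ j)))
      = ((Finset.Icc 1 (N - 1)).powersetCard k).filter (fun J => ¬ ∀ j ∈ J, j ≤ T) := by
    ext J
    simp only [Finset.mem_filter, Finset.mem_powerset, Finset.mem_powersetCard]
    constructor
    · rintro ⟨hs, h1, h2⟩
      exact ⟨⟨hs, by simp at h1; omega⟩, fun hP => h2 (Or.inl ⟨by simp, hP⟩)⟩
    · rintro ⟨⟨hs, h1⟩, h2⟩
      refine ⟨hs, by simp; omega, fun hor => ?_⟩
      rcases hor with ⟨-, hP⟩ | ⟨hb, -⟩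
      · exact h2 hP
      · exact absurd hb (by simp)
  rw [hcong]
  have hsplit := Finset.card_filter_add_card_filter_not
    (s := (Finset.Icc 1 (N - 1)).powersetCard k) (p := fun J => ∀ j ∈ J, j ≤ T)
  have hbadeq : ((Finset.Icc 1 (N - 1)).powersetCard k).filter (fun J => ∀ j ∈ J, j ≤ T)
      = (Finset.Icc 1 T).powersetCard k := by
    ext J
    simp only [Finset.mem_filter, Finset.mem_powersetCard]
    constructor
    · rintro ⟨⟨hs, h1⟩, h2⟩
      refine ⟨?_, h1⟩
      intro j hj
      have := Finset.mem_Icc.1 (hs hj)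
      exact Finset.mem_Icc.2 ⟨this.1, h2 _ hj⟩
    · rintro ⟨hs, h1⟩
      have hmem : ∀ j ∈ J, 1 ≤ j ∧ j ≤ T := fun j hj => Finset.mem_Icc.1 (hs hj)
      refine ⟨⟨?_, h1⟩, fun j hj => (hmem j hj).2⟩
      intro j hj
      exact Finset.mem_Icc.2 ⟨(hmem j hj).1, by have := (hmem j hj).2; omega⟩
  rw [hbadeq] at hsplit
  rw [Finset.card_powersetCard, Finset.card_powersetCard, Nat.card_Icc, Nat.card_Icc] at hsplit
  have e1 : T + 1 - 1 = T := by omega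
  have e3 : N - 1 + 1 - 1 = N - 1 := by omega
  rw [e1, e3] at hsplit
  omega

open Classical in
lemma countFT {N m k : ℕ} (hN : 2 ≤ N) (hk : m = 1 + 2 * k) :
    (((Finset.Icc 1 (N - 1)).powerset).filter (fun J =>
        (cond false 1 0) + (cond true 1 0) + 2 * J.card = m ∧
        ¬ (((true : Bool) = false ∧ ∀ j ∈ J, j ≤ N / 2) ∨
           ((false : Bool) = false ∧ ∀ j ∈ J, N - N / 2 ≤ j)))).card
      + (N / 2).choose k = (N - 1).choose k := by
  set T := N / 2 with hT
  have hTle : T ≤ N - 1 := by omega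
  have hcong : ((Finset.Icc 1 (N - 1)).powerset).filter (fun J =>
        (cond false 1 0) + (cond true 1 0) + 2 * J.card = m ∧
        ¬ (((true : Bool) = false ∧ ∀ j ∈ J, j ≤ N / 2) ∨
           ((false : Bool) = false ∧ ∀ j ∈ J, N - N / 2 ≤ j)))
      = ((Finset.Icc 1 (N - 1)).powersetCard k).filter (fun J => ¬ ∀ j ∈ J, N - T ≤ j) := by
    ext J
    simp only [Finset.mem_filter, Finset.mem_powerset, Finset.mem_powersetCard]
    constructor
    · rintro ⟨hs, h1, h2⟩
      exact ⟨⟨hs, by simp at h1; omega⟩, fun hP => h2 (Or.inr ⟨by simp, hP⟩)⟩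
    · rintro ⟨⟨hs, h1⟩, h2⟩
      refine ⟨hs, by simp; omega, fun hor => ?_⟩
      rcases hor with ⟨hb, -⟩ | ⟨-, hP⟩
      · exact absurd hb (by simp)
      · exact h2 hP
  rw [hcong]
  have hsplit := Finset.card_filter_add_card_filter_not
    (s := (Finset.Icc 1 (N - 1)).powersetCard k) (p := fun J => ∀ j ∈ J, N - T ≤ j)
  have hbadeq : ((Finset.Icc 1 (N - 1)).powersetCard k).filter (fun J => ∀ j ∈ J, N - T ≤ j)
      = (Finset.Icc (N - T) (N - 1)).powersetCard k := by
    ext J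
    simp only [Finset.mem_filter, Finset.mem_powersetCard]
    constructor
    · rintro ⟨⟨hs, h1⟩, h2⟩
      refine ⟨?_, h1⟩
      intro j hj
      have := Finset.mem_Icc.1 (hs hj)
      exact Finset.mem_Icc.2 ⟨h2 _ hj, this.2⟩
    · rintro ⟨hs, h1⟩
      have hmem : ∀ j ∈ J, N - T ≤ j ∧ j ≤ N - 1 := fun j hj => Finset.mem_Icc.1 (hs hj)
      refine ⟨⟨?_, h1⟩, fun j hj => (hmem j hj).1⟩
      intro j hj
      exact Finset.mem_Icc.2 ⟨by have := (hmem j hj).1; omega, (hmem j hj).2⟩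
  rw [hbadeq] at hsplit
  rw [Finset.card_powersetCard, Finset.card_powersetCard, Nat.card_Icc, Nat.card_Icc] at hsplit
  have e2 : N - 1 + 1 - (N - T) = T := by omega
  have e3 : N - 1 + 1 - 1 = N - 1 := by omega
  rw [e2, e3] at hsplit
  omega

open Classical in
lemma countFF {N m k : ℕ} (hN : 2 ≤ N) (hk : m = 2 * k) (hk2 : 2 ≤ k) :
    (((Finset.Icc 1 (N - 1)).powerset).filter (fun J =>
        (cond false 1 0) + (cond false 1 0) + 2 * J.card = m ∧
        ¬ (((false : Bool) = false ∧ ∀ j ∈ J, j ≤ N / 2) ∨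
           ((false : Bool) = false ∧ ∀ j ∈ J, N - N / 2 ≤ j)))).card
      + 2 * (N / 2).choose k = (N - 1).choose k := by
  set T := N / 2 with hT
  have hTle : T ≤ N - 1 := by omega
  have hcong : ((Finset.Icc 1 (N - 1)).powerset).filter (fun J =>
        (cond false 1 0) + (cond false 1 0) + 2 * J.card = m ∧
        ¬ (((false : Bool) = false ∧ ∀ j ∈ J, j ≤ N / 2) ∨
           ((false : Bool) = false ∧ ∀ j ∈ J, N - N / 2 ≤ j)))
      = ((Finset.Icc 1 (N - 1)).powersetCard k).filter
          (fun J => ¬ ((∀ j ∈ J, j ≤ T) ∨ (∀ j ∈ J, N - T ≤ j))) := by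
    ext J
    simp only [Finset.mem_filter, Finset.mem_powerset, Finset.mem_powersetCard]
    constructor
    · rintro ⟨hs, h1, h2⟩
      refine ⟨⟨hs, by simp at h1; omega⟩, fun hor => ?_⟩
      exact h2 (hor.elim (fun h => Or.inl ⟨by simp, h⟩) (fun h => Or.inr ⟨by simp, h⟩))
    · rintro ⟨⟨hs, h1⟩, h2⟩
      refine ⟨hs, by simp; omega, fun hor => ?_⟩
      exact h2 (hor.elim (fun h => Or.inl h.2) (fun h => Or.inr h.2))
  rw [hcong]
  have hsplit := Finset.card_filter_add_card_filter_not
    (s := (Finset.Icc 1 (N - 1)).powersetCard k)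
    (p := fun J => (∀ j ∈ J, j ≤ T) ∨ (∀ j ∈ J, N - T ≤ j))
  rw [Finset.filter_or] at hsplit
  have hdisj : Disjoint
      (((Finset.Icc 1 (N - 1)).powersetCard k).filter (fun J => ∀ j ∈ J, j ≤ T))
      (((Finset.Icc 1 (N - 1)).powersetCard k).filter (fun J => ∀ j ∈ J, N - T ≤ j)) := by
    rw [Finset.disjoint_left]
    intro J hJ1 hJ2
    simp only [Finset.mem_filter, Finset.mem_powersetCard] at hJ1 hJ2
    have hsub : J ⊆ Finset.Icc (N - T) T := by
      intro j hj
      rw [Finset.mem_Icc]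
      exact ⟨hJ2.2 _ hj, hJ1.2 _ hj⟩
    have := Finset.card_le_card hsub
    rw [Nat.card_Icc] at this
    have h1 := hJ1.1.2
    omega
  rw [Finset.card_union_of_disjoint hdisj] at hsplit
  have hbad1 : ((Finset.Icc 1 (N - 1)).powersetCard k).filter (fun J => ∀ j ∈ J, j ≤ T)
      = (Finset.Icc 1 T).powersetCard k := by
    ext J
    simp only [Finset.mem_filter, Finset.mem_powersetCard]
    constructor
    · rintro ⟨⟨hs, h1⟩, h2⟩
      refine ⟨?_, h1⟩
      intro j hj
      have := Finset.mem_Icc.1 (hs hj)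
      exact Finset.mem_Icc.2 ⟨this.1, h2 _ hj⟩
    · rintro ⟨hs, h1⟩
      have hmem : ∀ j ∈ J, 1 ≤ j ∧ j ≤ T := fun j hj => Finset.mem_Icc.1 (hs hj)
      refine ⟨⟨?_, h1⟩, fun j hj => (hmem j hj).2⟩
      intro j hj
      exact Finset.mem_Icc.2 ⟨(hmem j hj).1, by have := (hmem j hj).2; omega⟩
  have hbad2 : ((Finset.Icc 1 (N - 1)).powersetCard k).filter (fun J => ∀ j ∈ J, N - T ≤ j)
      = (Finset.Icc (N - T) (N - 1)).powersetCard k := by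
    ext J
    simp only [Finset.mem_filter, Finset.mem_powersetCard]
    constructor
    · rintro ⟨⟨hs, h1⟩, h2⟩
      refine ⟨?_, h1⟩
      intro j hj
      have := Finset.mem_Icc.1 (hs hj)
      exact Finset.mem_Icc.2 ⟨h2 _ hj, this.2⟩
    · rintro ⟨hs, h1⟩
      have hmem : ∀ j ∈ J, N - T ≤ j ∧ j ≤ N - 1 := fun j hj => Finset.mem_Icc.1 (hs hj)
      refine ⟨⟨?_, h1⟩, fun j hj => (hmem j hj).1⟩
      intro j hj
      exact Finset.mem_Icc.2 ⟨by have := (hmem j hj).1; omega, (hmem j hj).2⟩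
  rw [hbad1, hbad2] at hsplit
  rw [Finset.card_powersetCard, Finset.card_powersetCard, Finset.card_powersetCard,
    Nat.card_Icc, Nat.card_Icc, Nat.card_Icc] at hsplit
  have e1 : T + 1 - 1 = T := by omega
  have e2 : N - 1 + 1 - (N - T) = T := by omega
  have e3 : N - 1 + 1 - 1 = N - 1 := by omega
  rw [e1, e2, e3] at hsplit
  omega

/-- For even `n ≥ 4` and `3 ≤ m ≤ n`, the number of good binary `n`-tuples with
exactly `m` ones fixed by the two-fixed-point reflection `x ↦ 2 - x (mod n)`. -/
theorem fix_good_m_reflection_two (n m : ℕ) (hn : 4 ≤ n) (heven : Even n)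
    (hm : 3 ≤ m) (hmn : m ≤ n) :
    ({a : ZMod n → Bool | GoodFun n a ∧ onesCount n a = m ∧ ∀ i, a (2 - i) = a i}.ncard : ℤ)
      = if Even m then ((n / 2).choose (m / 2) : ℤ) - 2 * (n / 4).choose (m / 2)
        else 2 * (n / 2 - 1).choose (m / 2) - 2 * (n / 4).choose (m / 2) := by
  classical
  obtain ⟨N, hN2⟩ := heven
  have hnN : n = 2 * N := by omega
  have hN : 2 ≤ N := by omega
  haveI : NeZero n := ⟨by omega⟩
  set c1 : ZMod n := ((1 : ℕ) : ZMod n) with hc1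
  set cN : ZMod n := ((1 + N : ℕ) : ZMod n) with hcN
  set P : (ZMod n → Bool) → Prop :=
    fun a => GoodFun n a ∧ onesCount n a = m ∧ ∀ i, a (2 - i) = a i with hP
  have h0 : {a : ZMod n → Bool | GoodFun n a ∧ onesCount n a = m ∧ ∀ i, a (2 - i) = a i}.ncard
      = (Finset.univ.filter P).card := by
    rw [Set.ncard_eq_toFinset_card']
    congr 1
    ext a
    simp [hP]
  have top : (Finset.univ.filter P).card
      = (Finset.univ.filter (fun a => P a ∧ a c1 = true)).card
        + (Finset.univ.filter (fun a => P a ∧ a c1 = false)).card := by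
    have h := Finset.card_filter_add_card_filter_not
      (s := Finset.univ.filter P) (p := fun a => a c1 = true)
    rw [Finset.filter_filter, Finset.filter_filter] at h
    rw [← h]
    congr 2
    ext a
    simp
  have key : ∀ x : Bool, (Finset.univ.filter (fun a => P a ∧ a c1 = x)).card
      = (Finset.univ.filter (fun a => P a ∧ a c1 = x ∧ a cN = true)).card
        + (Finset.univ.filter (fun a => P a ∧ a c1 = x ∧ a cN = false)).card := by
    intro x
    have h := Finset.card_filter_add_card_filter_not
      (s := Finset.univ.filter (fun a => P a ∧ a c1 = x)) (p := fun a => a cN = true)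
    rw [Finset.filter_filter, Finset.filter_filter] at h
    rw [← h]
    congr 1
    · congr 1
      ext a
      simp [and_assoc]
    · congr 1
      ext a
      simp [and_assoc]
  have sTT := card_slice hnN hN m hm true true
  have sTF := card_slice hnN hN m hm true false
  have sFT := card_slice hnN hN m hm false true
  have sFF := card_slice hnN hN m hm false false
  rw [h0, top, key true, key false, sTT, sTF, sFT, sFF]
  clear sFF sFT sTF sTT key top h0 hP hc1 hcN
  have hq2 : n / 2 = N := by omega
  have hq4 : n / 4 = N / 2 := by omega
  rw [hq2, hq4]
  rcases Nat.even_or_odd m with hpar | hpar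
  · rw [if_pos hpar]
    obtain ⟨k0, hk0⟩ := hpar
    have hk04 : 2 ≤ k0 := by omega
    have cTT := countTT (m := m) (k := k0 - 1) hN (by omega)
    have cTF := countMismatch (N := N) (m := m) true false (by intro c; simp; omega)
    have cFT := countMismatch (N := N) (m := m) false true (by intro c; simp; omega)
    have cFF := countFF (m := m) (k := k0) hN (by omega) hk04
    have hch : N.choose k0 = (N - 1).choose (k0 - 1) + (N - 1).choose k0 := by
      have h := Nat.choose_succ_succ' (N - 1) (k0 - 1)
      rw [show N - 1 + 1 = N from by omega, show k0 - 1 + 1 = k0 from by omega] at h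
      omega
    have hm2 : m / 2 = k0 := by omega
    rw [hm2]
    have hfe : ((true : Bool) = false) = False := by simp
    have hff : ((false : Bool) = false) = True := by simp
    simp only [cond_true, cond_false, hfe, hff, true_and, false_and, and_true, and_false,
      false_or, or_false, or_self, not_false_eq_true, not_false_iff,
      show (1 + 1 : ℕ) = 2 from rfl, show (0 + 0 : ℕ) = 0 from rfl,
      show (1 + 0 : ℕ) = 1 from rfl, show (0 + 1 : ℕ) = 1 from rfl,
      Nat.zero_add, Nat.add_zero, zero_add, add_zero]
      at cTT cTF cFT cFF ⊢
    push_cast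
    omega
  · rw [if_neg (by simpa using hpar)]
    obtain ⟨k0, hk0⟩ := hpar
    have cTT := countMismatch (N := N) (m := m) true true (by intro c; simp; omega)
    have cFF := countMismatch (N := N) (m := m) false false (by intro c; simp; omega)
    have cTF := countTF (m := m) (k := k0) hN (by omega)
    have cFT := countFT (m := m) (k := k0) hN (by omega)
    have hm2 : m / 2 = k0 := by omega
    rw [hm2]
    have hfe : ((true : Bool) = false) = False := by simp
    have hff : ((false : Bool) = false) = True := by simp
    simp only [cond_true, cond_false, hfe, hff, true_and, false_and, and_true, and_false,
      false_or, or_false, or_self, not_false_eq_true, not_false_iff,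
      show (1 + 1 : ℕ) = 2 from rfl, show (0 + 0 : ℕ) = 0 from rfl,
      show (1 + 0 : ℕ) = 1 from rfl, show (0 + 1 : ℕ) = 1 from rfl,
      Nat.zero_add, Nat.add_zero, zero_add, add_zero]
      at cTT cTF cFT cFF ⊢
    push_cast
    omega
end

section
/- For fixed m≥3, the number p_{m,n} of inequivalent integer m-gons of perimeter n satisfies p_{m,n} ~ ((2^{m-1} - m)/(2^m · m!)) · n^{m-1} as n → ∞. -/
open Filter

/-- Integer `m`-gons of perimeter `n`: `m`-tuples (here lists of length `m`) of
positive integer side lengths, each strictly less than `n/2`, summing to `n`. -/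
def IntMgon (m n : ℕ) : Type :=
  {l : List ℕ // l.length = m ∧ (∀ x ∈ l, 0 < x ∧ 2 * x < n) ∧ l.sum = n}

/-- Two `m`-gons are equivalent iff one side-list is a cyclic rotation of the other,
or of its reversal. -/
def MgonRel (m n : ℕ) (a b : IntMgon m n) : Prop :=
  ∃ k : ℕ, b.1 = a.1.rotate k ∨ b.1 = a.1.reverse.rotate k

/-- The number of inequivalent integer `m`-gons with perimeter `n`. -/
noncomputable def mgonCount (m n : ℕ) : ℕ := Nat.card (Quot (MgonRel m n))

namespace MgonAux

open Finset


lemma card_piAntidiag_univ (k s : ℕ) :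
    (Finset.piAntidiag (Finset.univ : Finset (Fin k)) s).card = (k + s - 1).choose s := by
  classical
  rw [← Finset.map_sym_eq_piAntidiag, Finset.card_map, Finset.sym_univ, Finset.card_univ,
    Sym.card_sym_eq_choose, Fintype.card_fin]

def posF (k N : ℕ) : Finset (Fin k → ℕ) :=
  (Finset.piAntidiag Finset.univ N).filter fun f => ∀ i, 0 < f i

lemma mem_posF {k N : ℕ} {f : Fin k → ℕ} : f ∈ posF k N ↔ (∑ i, f i = N) ∧ ∀ i, 0 < f i := by
  simp [posF, Finset.mem_piAntidiag]

lemma card_posF (k N : ℕ) (hk : 1 ≤ k) (hN : k ≤ N) :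
    (posF k N).card = (N - 1).choose (k - 1) := by
  classical
  have h : posF k N = (Finset.piAntidiag (Finset.univ : Finset (Fin k)) (N - k)).map
      ⟨fun f i => f i + 1, fun f g h => by
        funext i; have := congrFun h i; simpa using this⟩ := by
    ext g
    simp only [mem_posF, Finset.mem_map, Finset.mem_piAntidiag, Function.Embedding.coeFn_mk]
    constructor
    · rintro ⟨hsum, hpos⟩
      refine ⟨fun i => g i - 1, ⟨?_, by simp⟩, ?_⟩
      · have h2 : ∑ i, (g i - 1 + 1) = N := by
          rw [← hsum]; exact Finset.sum_congr rfl fun i _ => by have := hpos i; omega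
        rw [Finset.sum_add_distrib, Finset.sum_const, card_univ, Fintype.card_fin,
          smul_eq_mul, mul_one] at h2
        omega
      · funext i; show g i - 1 + 1 = g i; have := hpos i; omega
    · rintro ⟨f, ⟨hsum, -⟩, rfl⟩
      show (∑ i, (f i + 1) = N) ∧ ∀ i, 0 < f i + 1
      constructor
      · rw [Finset.sum_add_distrib, Finset.sum_const, card_univ, Fintype.card_fin,
          smul_eq_mul, mul_one, hsum]
        omega
      · intro i; simp
  rw [h, Finset.card_map, card_piAntidiag_univ]
  have h1 : k + (N - k) - 1 = N - 1 := by omega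
  rw [h1]
  have h2 : N - k = (N - 1) - (k - 1) := by omega
  rw [h2, Nat.choose_symm (by omega)]

def mgonF (m n : ℕ) : Finset (Fin m → ℕ) :=
  (posF m n).filter fun f => ∀ i, 2 * f i < n

lemma mem_mgonF {m n : ℕ} {f : Fin m → ℕ} :
    f ∈ mgonF m n ↔ (∑ i, f i = n) ∧ ∀ i, 0 < f i ∧ 2 * f i < n := by
  simp only [mgonF, Finset.mem_filter, mem_posF]
  exact ⟨fun ⟨⟨a, b⟩, c⟩ => ⟨a, fun i => ⟨b i, c i⟩⟩,
    fun ⟨a, b⟩ => ⟨⟨a, fun i => (b i).1⟩, fun i => (b i).2⟩⟩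

lemma card_big (m n : ℕ) (hm : 1 ≤ m) (hn : 2 * m ≤ n) (i : Fin m) :
    ((posF m n).filter fun f => n ≤ 2 * f i).card = (n / 2).choose (m - 1) := by
  classical
  set c := (n - 1) / 2 with hc
  have key : ((posF m n).filter fun f => n ≤ 2 * f i) =
      (posF m (n - c)).map ⟨fun f j => f j + if j = i then c else 0, fun f g h => by
        funext j; have := congrFun h j; dsimp at this; omega⟩ := by
    ext g
    simp only [Finset.mem_filter, mem_posF, Finset.mem_map, Function.Embedding.coeFn_mk]
    have hsplit : ∀ h : Fin m → ℕ, ∑ j, h j = h i + ∑ j ∈ univ.erase i, h j :=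
      fun h => (Finset.add_sum_erase _ h (mem_univ i)).symm
    constructor
    · rintro ⟨⟨hsum, hpos⟩, hbig⟩
      have hgi : c < g i := by omega
      refine ⟨fun j => g j - if j = i then c else 0, ⟨?_, fun j => ?_⟩, ?_⟩
      · show ∑ j, (g j - if j = i then c else 0) = n - c
        have h1 := hsplit (fun j => g j - if j = i then c else 0)
        beta_reduce at h1
        have he : ∑ j ∈ univ.erase i, (g j - if j = i then c else 0) =
            ∑ j ∈ univ.erase i, g j :=
          Finset.sum_congr rfl fun j hj => by
            rw [if_neg (Finset.mem_erase.1 hj).1, Nat.sub_zero]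
        rw [h1, he, if_pos rfl]
        rw [hsplit g] at hsum
        omega
      · show 0 < g j - if j = i then c else 0
        rcases eq_or_ne j i with hj | hj
        · subst hj; rw [if_pos rfl]; omega
        · rw [if_neg hj, Nat.sub_zero]; exact hpos j
      · funext j
        show (g j - if j = i then c else 0) + (if j = i then c else 0) = g j
        rcases eq_or_ne j i with hj | hj
        · subst hj; rw [if_pos rfl]; omega
        · rw [if_neg hj]; omega
    · rintro ⟨f, ⟨hsum, hpos⟩, rfl⟩
      rw [hsplit f] at hsum
      have hfi := hpos i
      refine ⟨⟨?_, fun j => ?_⟩, ?_⟩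
      · show ∑ j, (f j + if j = i then c else 0) = n
        have h1 := hsplit (fun j => f j + if j = i then c else 0)
        beta_reduce at h1
        have he : ∑ j ∈ univ.erase i, (f j + if j = i then c else 0) =
            ∑ j ∈ univ.erase i, f j :=
          Finset.sum_congr rfl fun j hj => by
            rw [if_neg (Finset.mem_erase.1 hj).1, Nat.add_zero]
        rw [h1, he, if_pos rfl]
        omega
      · show 0 < f j + if j = i then c else 0
        have := hpos j
        omega
      · show n ≤ 2 * (f i + if i = i then c else 0)
        rw [if_pos rfl]
        omega
  rw [key, Finset.card_map, card_posF m _ hm (by omega)]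
  congr 1
  omega

lemma card_mgonF (m n : ℕ) (hm : 3 ≤ m) (hn : 2 * m ≤ n) :
    (mgonF m n).card + m * ((n / 2).choose (m - 1)) = (n - 1).choose (m - 1) := by
  classical
  have hm1 : 1 ≤ m := by omega
  have hmn : m ≤ n := by omega
  have hdisj : ∀ i ∈ (univ : Finset (Fin m)), ∀ j ∈ (univ : Finset (Fin m)), i ≠ j →
      Disjoint ((posF m n).filter fun f => n ≤ 2 * f i)
        ((posF m n).filter fun f => n ≤ 2 * f j) := by
    intro i _ j _ hij
    rw [Finset.disjoint_left]
    intro f hfi hfj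
    simp only [Finset.mem_filter, mem_posF] at hfi hfj
    obtain ⟨⟨hsum, hpos⟩, hbi⟩ := hfi
    obtain ⟨-, hbj⟩ := hfj
    have hk : ((univ : Finset (Fin m)) \ {i, j}).Nonempty := by
      rw [← Finset.card_pos]
      have h1 : ({i, j} : Finset (Fin m)).card ≤ 2 := Finset.card_insert_le _ _ |>.trans (by simp)
      have h2 := Finset.card_sdiff_of_subset (Finset.subset_univ ({i, j} : Finset (Fin m)))
      rw [card_univ, Fintype.card_fin] at h2
      omega
    obtain ⟨k, hk⟩ := hk
    simp only [Finset.mem_sdiff, Finset.mem_insert, Finset.mem_singleton, mem_univ, true_and,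
      not_or] at hk
    have hs3 : ∑ x ∈ ({i, j, k} : Finset (Fin m)), f x ≤ n := by
      rw [← hsum]
      exact Finset.sum_le_sum_of_subset (Finset.subset_univ _)
    have hik : ¬ i = k := fun h => hk.1 h.symm
    have hjk : ¬ j = k := fun h => hk.2 h.symm
    rw [Finset.sum_insert (by simp [hij, hik]), Finset.sum_insert (by simp [hjk]),
      Finset.sum_singleton] at hs3
    have := hpos k
    omega
  have hsplit := Finset.card_filter_add_card_filter_not
    (s := posF m n) (p := fun f => ∀ i, 2 * f i < n)
  have hneg : (posF m n).filter (fun f => ¬ ∀ i, 2 * f i < n) =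
      Finset.univ.biUnion fun i => (posF m n).filter fun f => n ≤ 2 * f i := by
    ext f
    simp only [Finset.mem_filter, Finset.mem_biUnion, mem_univ, true_and, not_forall, not_lt]
    constructor
    · rintro ⟨hf, i, hi⟩; exact ⟨i, hf, hi⟩
    · rintro ⟨i, hf, hi⟩; exact ⟨hf, i, hi⟩
  have hcardU : ((posF m n).filter fun f => ¬ ∀ i, 2 * f i < n).card
      = m * ((n / 2).choose (m - 1)) := by
    rw [hneg, Finset.card_biUnion hdisj,
      Finset.sum_congr rfl fun i _ => card_big m n hm1 hn i]
    simp [mul_comm]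
  rw [card_posF m n hm1 hmn] at hsplit
  rw [← hsplit, hcardU, mgonF]


lemma tendsto_choose_div (k : ℕ) (u : ℕ → ℕ) (c : ℝ)
    (hc : Tendsto (fun n => (u n : ℝ) / (n : ℝ)) atTop (nhds c))
    (hu : Tendsto u atTop atTop) :
    Tendsto (fun n => ((u n).choose k : ℝ) / (n : ℝ) ^ k) atTop
      (nhds (c ^ k / k.factorial)) := by
  have hlim : Tendsto (fun n => (∏ i ∈ Finset.range k, (((u n : ℝ) - i) / n)) / k.factorial)
      atTop (nhds (c ^ k / k.factorial)) := by
    apply Tendsto.div_const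
    have h : Tendsto (fun n => ∏ i ∈ Finset.range k, (((u n : ℝ) - i) / n)) atTop
        (nhds (∏ _i ∈ Finset.range k, c)) := by
      apply tendsto_finset_prod
      intro i _
      have h0 : Tendsto (fun n : ℕ => (i : ℝ) / n) atTop (nhds 0) :=
        tendsto_const_div_atTop_nhds_zero_nat (i : ℝ)
      have := hc.sub h0
      simpa [sub_div] using this
    simpa using h
  apply hlim.congr'
  filter_upwards [hu.eventually_ge_atTop k, eventually_ge_atTop 1] with n hk hn1
  have hne : (n : ℝ) ≠ 0 := by positivity
  have hkf : (k.factorial : ℝ) ≠ 0 := by positivity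
  have hcast : ((u n).choose k : ℝ) * k.factorial = ∏ i ∈ Finset.range k, ((u n : ℝ) - i) := by
    have h1 : ((u n).descFactorial k : ℝ) = ∏ i ∈ Finset.range k, ((u n : ℝ) - i) := by
      rw [Nat.descFactorial_eq_prod_range, Nat.cast_prod]
      refine Finset.prod_congr rfl fun i hi => ?_
      have : i ≤ u n := le_trans (Finset.mem_range.1 hi).le hk
      rw [Nat.cast_sub this]
    rw [← h1, Nat.descFactorial_eq_factorial_mul_choose]
    push_cast
    ring
  rw [Finset.prod_div_distrib, Finset.prod_const, Finset.card_range, ← hcast]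
  field_simp

lemma tendsto_sub_one_div : Tendsto (fun n : ℕ => ((n - 1 : ℕ) : ℝ) / n) atTop (nhds 1) := by
  have h : Tendsto (fun n : ℕ => 1 - 1 / (n : ℝ)) atTop (nhds 1) := by
    have := tendsto_const_div_atTop_nhds_zero_nat (1 : ℝ)
    simpa using (tendsto_const_nhds (x := (1:ℝ))).sub this
  apply h.congr'
  filter_upwards [eventually_ge_atTop 1] with n hn
  have hne : (n : ℝ) ≠ 0 := by positivity
  rw [Nat.cast_sub hn]
  field_simp
  simp

lemma tendsto_half_div : Tendsto (fun n : ℕ => ((n / 2 : ℕ) : ℝ) / n) atTop (nhds (1 / 2)) := by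
  have hr : Tendsto (fun n : ℕ => ((n % 2 : ℕ) : ℝ) / n) atTop (nhds 0) := by
    apply squeeze_zero' (g := fun n : ℕ => 1 / (n : ℝ))
    · filter_upwards with n; positivity
    · filter_upwards [eventually_ge_atTop 1] with n hn
      have h2 : (n : ℝ) > 0 := by exact_mod_cast hn
      have hle : ((n % 2 : ℕ) : ℝ) ≤ 1 := by
        exact_mod_cast Nat.le_of_lt_succ (Nat.mod_lt n (by norm_num))
      exact div_le_div_of_nonneg_right hle h2.le
    · exact tendsto_const_div_atTop_nhds_zero_nat 1
  have h : Tendsto (fun n : ℕ => (1 - ((n % 2 : ℕ) : ℝ) / n) / 2) atTop (nhds (1 / 2)) := by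
    have h2 := ((tendsto_const_nhds (x := (1:ℝ))).sub hr).div_const 2
    rw [sub_zero] at h2
    exact h2
  apply h.congr'
  filter_upwards [eventually_ge_atTop 1] with n hn
  have hne : (n : ℝ) ≠ 0 := by positivity
  have key : (2 : ℝ) * ((n / 2 : ℕ) : ℝ) = (n : ℝ) - ((n % 2 : ℕ) : ℝ) := by
    have h3 : 2 * (n / 2) + n % 2 = n := Nat.div_add_mod n 2
    have h4 : ((2 * (n / 2) + n % 2 : ℕ) : ℝ) = ((n : ℕ) : ℝ) := by rw [h3]
    push_cast at h4
    linarith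
  rw [div_eq_div_iff (by norm_num : (2:ℝ) ≠ 0) hne]
  have hexp : (1 - ((n % 2 : ℕ) : ℝ) / n) * n = n - ((n % 2 : ℕ) : ℝ) := by
    field_simp
  rw [hexp]
  linarith [key]


variable {m n : ℕ}

lemma rot_id {l : List ℕ} {m : ℕ} (hl : l.length = m) (hm : 0 < m) (t : ℕ) :
    (l.rotate t).rotate (m - t % m) = l := by
  rw [List.rotate_rotate]
  have h1 : t % m < m := Nat.mod_lt _ hm
  have h2 : t + (m - t % m) = m * (t / m) + m := by
    have := Nat.div_add_mod t m
    omega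
  have h3 : m * (t / m) + m = m * (t / m + 1) := by ring
  rw [h2, h3, ← hl, List.rotate_length_mul]

lemma rot_eq_self_of {l : List ℕ} {m : ℕ} (hl : l.length = m) (hm : 0 < m) {t d : ℕ}
    (h : (l.rotate t).rotate d = l.rotate t) : l.rotate d = l := by
  set s := m - t % m with hs
  have h2 := congrArg (fun x : List ℕ => x.rotate s) h
  have h3 : l.rotate (t + s) = l := by
    rw [← List.rotate_rotate]; exact rot_id hl hm t
  rw [rot_id hl hm t] at h2
  rw [List.rotate_rotate, List.rotate_rotate] at h2
  have h5 : l.rotate (t + (d + s)) = (l.rotate (t + s)).rotate d := by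
    rw [List.rotate_rotate]
    congr 1
    ring
  rw [h5, h3] at h2
  exact h2

lemma rot_cancel {l : List ℕ} {m : ℕ} (hl : l.length = m) (hm : 0 < m) {k k' : Fin m}
    (h : l.rotate (k : ℕ) = l.rotate (k' : ℕ)) (hne : k ≠ k') :
    ∃ d, 0 < d ∧ d < m ∧ l.rotate d = l := by
  have hvne : (k : ℕ) ≠ (k' : ℕ) := fun hh => hne (Fin.ext hh)
  rcases Nat.lt_or_ge (k : ℕ) (k' : ℕ) with hlt | hge
  · refine ⟨(k' : ℕ) - k, by omega, by have := k'.isLt; omega, ?_⟩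
    apply rot_eq_self_of hl hm (t := (k : ℕ))
    rw [List.rotate_rotate]
    have he : (k : ℕ) + ((k' : ℕ) - k) = (k' : ℕ) := by omega
    rw [he, ← h]
  · refine ⟨(k : ℕ) - k', by omega, by have := k.isLt; omega, ?_⟩
    apply rot_eq_self_of hl hm (t := (k' : ℕ))
    rw [List.rotate_rotate]
    have he : (k' : ℕ) + ((k : ℕ) - k') = (k : ℕ) := by omega
    rw [he, h]

def rotMg (a : IntMgon m n) (k : ℕ) : IntMgon m n :=
  ⟨a.1.rotate k, by
    obtain ⟨h1, h2, h3⟩ := a.2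
    exact ⟨by rw [List.length_rotate, h1], fun x hx => h2 x (List.mem_rotate.1 hx),
      by rw [(a.1.rotate_perm k).sum_eq, h3]⟩⟩

def revMg (a : IntMgon m n) : IntMgon m n :=
  ⟨a.1.reverse, by
    obtain ⟨h1, h2, h3⟩ := a.2
    exact ⟨by rw [List.length_reverse, h1], fun x hx => h2 x (List.mem_reverse.1 hx),
      by rw [List.sum_reverse, h3]⟩⟩

lemma mgonRel_equivalence (m n : ℕ) : Equivalence (MgonRel m n) := by
  constructor
  · intro a; exact ⟨0, Or.inl (by rw [List.rotate_zero])⟩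
  · rintro a b ⟨k, h | h⟩
    · exact ⟨_, Or.inl (List.rotate_eq_iff.1 h.symm)⟩
    · have h1 : a.1.reverse = b.1.rotate (b.1.length - k % b.1.length) :=
        List.rotate_eq_iff.1 h.symm
      have h2 : a.1 = b.1.reverse.rotate
          (b.1.length - (b.1.length - k % b.1.length) % b.1.length) := by
        rw [← List.reverse_reverse a.1, h1, List.reverse_rotate]
      exact ⟨_, Or.inr h2⟩
  · rintro a b c ⟨k, hb | hb⟩ ⟨k', hc | hc⟩
    · exact ⟨k + k', Or.inl (by rw [hc, hb, List.rotate_rotate])⟩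
    · have key : c.1 = a.1.reverse.rotate
          (a.1.length - k % a.1.length + k') := by
        rw [hc, hb, List.reverse_rotate, List.rotate_rotate]
      exact ⟨_, Or.inr key⟩
    · exact ⟨k + k', Or.inr (by rw [hc, hb, List.rotate_rotate])⟩
    · have key : c.1 = a.1.rotate
          (a.1.reverse.length - k % a.1.reverse.length + k') := by
        rw [hc, hb, List.reverse_rotate, List.reverse_reverse, List.rotate_rotate]
      exact ⟨_, Or.inl key⟩

def orbMap (a : IntMgon m n) : Fin m ⊕ Fin m → IntMgon m n :=
  Sum.elim (fun k => rotMg a (k : ℕ)) fun k => rotMg (revMg a) (k : ℕ)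

lemma rel_orbMap (a : IntMgon m n) (x : Fin m ⊕ Fin m) : MgonRel m n a (orbMap a x) := by
  cases x with
  | inl k => exact ⟨(k : ℕ), Or.inl rfl⟩
  | inr k => exact ⟨(k : ℕ), Or.inr rfl⟩

lemma orbMap_surj (hm : 0 < m) {a b : IntMgon m n} (h : MgonRel m n a b) :
    ∃ x, orbMap a x = b := by
  obtain ⟨k, h | h⟩ := h
  · refine ⟨Sum.inl ⟨k % m, Nat.mod_lt _ hm⟩, Subtype.ext ?_⟩
    show a.1.rotate (k % m) = b.1
    rw [h, ← List.rotate_mod a.1 k, a.2.1]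
  · refine ⟨Sum.inr ⟨k % m, Nat.mod_lt _ hm⟩, Subtype.ext ?_⟩
    show a.1.reverse.rotate (k % m) = b.1
    rw [h, ← List.rotate_mod a.1.reverse k, List.length_reverse, a.2.1]

def MgBad (a : IntMgon m n) : Prop :=
  (∃ j, 0 < j ∧ j < m ∧ a.1.rotate j = a.1) ∨ ∃ j, a.1.reverse.rotate j = a.1

lemma orbMap_inj (hm3 : 3 ≤ m) {a : IntMgon m n} (hbad : ¬MgBad a) :
    Function.Injective (orbMap a) := by
  have hm : 0 < m := by omega
  have hl : a.1.length = m := a.2.1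
  have hlr : a.1.reverse.length = m := by rw [List.length_reverse, hl]
  intro x y hxy
  have hval := congrArg Subtype.val hxy
  cases x with
  | inl k =>
    cases y with
    | inl k' =>
      have hval' : a.1.rotate (k : ℕ) = a.1.rotate (k' : ℕ) := hval
      congr 1
      by_contra hne
      obtain ⟨d, hd1, hd2, hd3⟩ := rot_cancel hl hm hval' hne
      exact hbad (Or.inl ⟨d, hd1, hd2, hd3⟩)
    | inr k' =>
      exfalso
      have hval' : a.1.rotate (k : ℕ) = a.1.reverse.rotate (k' : ℕ) := hval
      have h2 := congrArg (fun t : List ℕ => t.rotate (m - (k : ℕ) % m)) hval'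
      rw [rot_id hl hm, List.rotate_rotate] at h2
      exact hbad (Or.inr ⟨_, h2.symm⟩)
  | inr k =>
    cases y with
    | inl k' =>
      exfalso
      have hval' : a.1.rotate (k' : ℕ) = a.1.reverse.rotate (k : ℕ) := hval.symm
      have h2 := congrArg (fun t : List ℕ => t.rotate (m - (k' : ℕ) % m)) hval'
      rw [rot_id hl hm, List.rotate_rotate] at h2
      exact hbad (Or.inr ⟨_, h2.symm⟩)
    | inr k' =>
      have hval' : a.1.reverse.rotate (k : ℕ) = a.1.reverse.rotate (k' : ℕ) := hval
      congr 1
      by_contra hne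
      obtain ⟨d, hd1, hd2, hd3⟩ := rot_cancel hlr hm hval' hne
      have h2 := congrArg List.reverse hd3
      rw [List.reverse_rotate, List.reverse_reverse, List.length_reverse, hl,
        Nat.mod_eq_of_lt hd2] at h2
      exact hbad (Or.inl ⟨m - d, by omega, by omega, h2⟩)

def ent (a : IntMgon m n) : Fin m → ℕ := fun i =>
  a.1[(i : ℕ)]'(by rw [a.2.1]; exact i.isLt)

lemma gcongr_idx {l : List ℕ} {i j : ℕ} (h : i = j) (hi : i < l.length) :
    l[i]'hi = l[j]'(h ▸ hi) := by subst h; rfl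

lemma gcongr_list {l l' : List ℕ} (h : l = l') (i : ℕ) (hi : i < l.length) :
    l[i]'hi = l'[i]'(h ▸ hi) := by subst h; rfl

lemma bad_collision' (hm3 : 3 ≤ m) {l : List ℕ} (hl : l.length = m)
    (h : (∃ j, 0 < j ∧ j < m ∧ l.rotate j = l) ∨ ∃ j, l.reverse.rotate j = l) :
    ∃ p q : Fin m, p ≠ q ∧
      l[(p : ℕ)]'(by rw [hl]; exact p.isLt) = l[(q : ℕ)]'(by rw [hl]; exact q.isLt) := by
  have hm : 0 < m := by omega
  have hlr : l.reverse.length = m := by rw [List.length_reverse, hl]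
  rcases h with ⟨j, hj0, hjm, hrot⟩ | ⟨j, hrev⟩
  · have h0 := List.getElem_rotate l j 0 (by rw [List.length_rotate, hl]; omega)
    have e1 := gcongr_list hrot 0 (by rw [List.length_rotate, hl]; omega)
    have hidx : (0 + j) % l.length = j := by
      rw [hl, Nat.zero_add, Nat.mod_eq_of_lt hjm]
    refine ⟨⟨0, by omega⟩, ⟨j, hjm⟩, ?_, ?_⟩
    · intro hc
      rw [Fin.ext_iff] at hc
      simp at hc
      omega
    · exact e1.symm.trans (h0.trans (gcongr_idx hidx (by omega)))
  · set j' := j % m with hj'def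
    have hj' : j' < m := Nat.mod_lt _ hm
    have hrev' : l.reverse.rotate j' = l := by
      rw [hj'def, ← hlr, List.rotate_mod, hrev]
    have hgen : ∀ (k : ℕ) (hk : k < m),
        l[k]'(by omega) = l[m - 1 - ((k + j') % m)]'(by omega) := by
      intro k hk
      have h1 := List.getElem_rotate l.reverse j' k (by rw [List.length_rotate, hlr]; omega)
      have e1 := gcongr_list hrev' k (by rw [List.length_rotate, hlr]; omega)
      have h2 := List.getElem_reverse (l := l) (i := (k + j') % l.reverse.length)
        (by rw [List.length_reverse]; exact Nat.mod_lt _ (by omega))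
      have hidx : l.length - 1 - ((k + j') % l.reverse.length) = m - 1 - ((k + j') % m) := by
        rw [hl, hlr]
      exact e1.symm.trans (h1.trans (h2.trans (gcongr_idx hidx (by omega))))
    rcases eq_or_ne j' (m - 1) with hj1 | hj1
    · have hkey := hgen 1 (by omega)
      have hidx : m - 1 - ((1 + j') % m) = m - 1 := by
        have h3 : 1 + j' = m := by omega
        rw [h3, Nat.mod_self]
        omega
      refine ⟨⟨1, by omega⟩, ⟨m - 1, by omega⟩, ?_, ?_⟩
      · intro hc
        rw [Fin.ext_iff] at hc
        simp at hc
        omega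
      · exact hkey.trans (gcongr_idx hidx (by omega))
    · have hkey := hgen 0 (by omega)
      have hidx : m - 1 - ((0 + j') % m) = m - 1 - j' := by
        rw [Nat.zero_add, Nat.mod_eq_of_lt hj']
      refine ⟨⟨0, by omega⟩, ⟨m - 1 - j', by omega⟩, ?_, ?_⟩
      · intro hc
        rw [Fin.ext_iff] at hc
        simp at hc
        omega
      · exact hkey.trans (gcongr_idx hidx (by omega))

lemma bad_collision (hm3 : 3 ≤ m) {a : IntMgon m n} (h : MgBad a) :
    ∃ p q : Fin m, p ≠ q ∧ ent a p = ent a q := by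
  obtain ⟨p, q, hpq, he⟩ := bad_collision' hm3 a.2.1 h
  exact ⟨p, q, hpq, he⟩


lemma ofFn_ent (a : IntMgon m n) : List.ofFn (ent a) = a.1 := by
  apply List.ext_getElem
  · rw [List.length_ofFn, a.2.1]
  · intro i h1 h2
    rw [List.getElem_ofFn]
    rfl

lemma ent_injective : Function.Injective (ent : IntMgon m n → Fin m → ℕ) := by
  intro a b h
  apply Subtype.ext
  rw [← ofFn_ent a, ← ofFn_ent b, h]

lemma sum_ent (a : IntMgon m n) : ∑ i, ent a i = n := by
  have h := List.sum_ofFn (f := ent a)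
  rw [ofFn_ent] at h
  rw [← h, a.2.2.2]

lemma ent_mem_mgonF (a : IntMgon m n) : ent a ∈ mgonF m n := by
  rw [mem_mgonF]
  exact ⟨sum_ent a, fun i => a.2.2.1 _ (List.getElem_mem _)⟩

def entEquiv (m n : ℕ) : IntMgon m n ≃ {f : Fin m → ℕ // f ∈ mgonF m n} where
  toFun a := ⟨ent a, ent_mem_mgonF a⟩
  invFun f := ⟨List.ofFn f.1, by
    obtain ⟨hsum, hcond⟩ := mem_mgonF.1 f.2
    refine ⟨List.length_ofFn, fun x hx => ?_, ?_⟩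
    · rw [List.mem_ofFn] at hx
      obtain ⟨i, rfl⟩ := hx
      exact hcond i
    · rw [List.sum_ofFn, hsum]⟩
  left_inv a := Subtype.ext (ofFn_ent a)
  right_inv f := Subtype.ext (funext fun i => by simp [ent, List.getElem_ofFn])

lemma card_collide (hm : 3 ≤ m) {p q : Fin m} (hpq : p ≠ q) :
    ((mgonF m n).filter fun f => f p = f q).card ≤ n ^ (m - 2) := by
  classical
  rcases Nat.eq_zero_or_pos n with hn0 | hn0
  · have hempty : (mgonF m n).filter (fun f => f p = f q) = ∅ := by
      rw [Finset.eq_empty_iff_forall_notMem]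
      intro f hf
      have h1 := (mem_mgonF.1 (Finset.mem_filter.1 hf).1).2 p
      omega
    simp [hempty]
  have hr : ∃ r : Fin m, r ≠ p ∧ r ≠ q := by
    have hne : ((univ : Finset (Fin m)) \ {p, q}).Nonempty := by
      rw [← Finset.card_pos]
      have h1 : ({p, q} : Finset (Fin m)).card ≤ 2 :=
        (Finset.card_insert_le _ _).trans (by simp)
      have h2 := Finset.card_sdiff_of_subset (Finset.subset_univ ({p, q} : Finset (Fin m)))
      rw [card_univ, Fintype.card_fin] at h2
      omega
    obtain ⟨r, hrr⟩ := hne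
    simp only [Finset.mem_sdiff, Finset.mem_insert, Finset.mem_singleton, not_or] at hrr
    exact ⟨r, hrr.2.1, hrr.2.2⟩
  obtain ⟨r, hrp, hrq⟩ := hr
  have hcardT : Fintype.card ({i : Fin m // i ≠ p ∧ i ≠ r} → Fin n) = n ^ (m - 2) := by
    rw [Fintype.card_fun, Fintype.card_fin]
    congr 1
    rw [Fintype.card_subtype]
    have hfe : (univ.filter fun i : Fin m => i ≠ p ∧ i ≠ r) = (univ.erase p).erase r := by
      ext i
      simp only [Finset.mem_filter, Finset.mem_erase, mem_univ, and_true, true_and]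
      tauto
    rw [hfe, Finset.card_erase_of_mem (Finset.mem_erase.2 ⟨hrp, mem_univ r⟩),
      Finset.card_erase_of_mem (mem_univ p), card_univ, Fintype.card_fin]
    omega
  have hle := Finset.card_le_card_of_injOn
      (f := fun (f : Fin m → ℕ) (i : {i : Fin m // i ≠ p ∧ i ≠ r}) =>
        (⟨f i.1 % n, Nat.mod_lt _ hn0⟩ : Fin n))
      (s := (mgonF m n).filter fun f => f p = f q)
      (t := (univ : Finset ({i : Fin m // i ≠ p ∧ i ≠ r} → Fin n)))
      (fun f _ => Finset.mem_univ _) ?_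
  · exact hle.trans (le_of_eq (by rw [Finset.card_univ, hcardT]))
  · intro f hf g hg hfg
    simp only [Finset.mem_coe, Finset.mem_filter, mem_mgonF] at hf hg
    obtain ⟨⟨hfs, hfc⟩, hfpq⟩ := hf
    obtain ⟨⟨hgs, hgc⟩, hgpq⟩ := hg
    have hval : ∀ i : Fin m, i ≠ p → i ≠ r → f i = g i := by
      intro i hip hir
      have h0 := congrFun hfg ⟨i, hip, hir⟩
      have h1 : f i % n = g i % n := by simpa [Fin.ext_iff] using h0
      rwa [Nat.mod_eq_of_lt (Nat.lt_of_le_of_lt (Nat.le_mul_of_pos_left (f i) (by norm_num))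
          (hfc i).2),
        Nat.mod_eq_of_lt (Nat.lt_of_le_of_lt (Nat.le_mul_of_pos_left (g i) (by norm_num))
          (hgc i).2)] at h1
    have hne2 : ∀ i : Fin m, i ≠ r → f i = g i := by
      intro i hir
      rcases eq_or_ne i p with rfl | hip
      · rw [hfpq, hgpq]
        exact hval q (fun h => hpq h.symm) (fun h => hrq h.symm)
      · exact hval i hip hir
    clear hfg
    funext i
    rcases eq_or_ne i r with rfl | hir
    · have h1 : f i + ∑ j ∈ univ.erase i, f j = n := by
        rw [Finset.add_sum_erase _ f (mem_univ i), hfs]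
      have h2 : g i + ∑ j ∈ univ.erase i, g j = n := by
        rw [Finset.add_sum_erase _ g (mem_univ i), hgs]
      have h3 : ∑ j ∈ univ.erase i, f j = ∑ j ∈ univ.erase i, g j :=
        Finset.sum_congr rfl fun j hj => hne2 j (Finset.mem_erase.1 hj).1
      omega
    · exact hne2 i hir

lemma count_bounds (m n : ℕ) (hm : 3 ≤ m) :
    (mgonF m n).card ≤ 2 * m * mgonCount m n ∧
    2 * m * mgonCount m n ≤ (mgonF m n).card + 2 * m * (m * m * n ^ (m - 2)) := by
  classical
  have hm0 : 0 < m := by omega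
  letI : Fintype (IntMgon m n) := Fintype.ofEquiv _ (entEquiv m n).symm
  letI : Fintype (Quot (MgonRel m n)) := Fintype.ofSurjective _ Quot.mk_surjective
  have hcardA : Fintype.card (IntMgon m n) = (mgonF m n).card := by
    rw [Fintype.card_congr (entEquiv m n), Fintype.card_coe]
  have hmk_eq : ∀ a b : IntMgon m n,
      Quot.mk (MgonRel m n) a = Quot.mk (MgonRel m n) b ↔ MgonRel m n a b := fun a b =>
    Quot.eq.trans (mgonRel_equivalence m n).eqvGen_iff
  set mk := Quot.mk (MgonRel m n) with hmkdef
  have hcount : mgonCount m n = ((univ : Finset (IntMgon m n)).image mk).card := by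
    rw [mgonCount, Nat.card_eq_fintype_card, hmkdef,
      Finset.image_univ_of_surjective Quot.mk_surjective, Finset.card_univ]
  have hfibsub : ∀ a : IntMgon m n,
      (univ.filter fun x => mk x = mk a) ⊆ univ.image (orbMap a) := by
    intro a x hx
    have hr : MgonRel m n a x := (hmk_eq a x).1 ((Finset.mem_filter.1 hx).2).symm
    obtain ⟨y, hy⟩ := orbMap_surj hm0 hr
    exact Finset.mem_image.2 ⟨y, mem_univ _, hy⟩
  have hcard2m : (univ : Finset (Fin m ⊕ Fin m)).card = 2 * m := by
    simp [Finset.card_univ, two_mul]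
  have hlow : (mgonF m n).card ≤ 2 * m * mgonCount m n := by
    rw [← hcardA, ← Finset.card_univ, hcount]
    apply Finset.card_le_mul_card_image
    intro b hb
    obtain ⟨a, -, rfl⟩ := Finset.mem_image.1 hb
    calc (univ.filter fun x => mk x = mk a).card
        ≤ (univ.image (orbMap a)).card := Finset.card_le_card (hfibsub a)
      _ ≤ (univ : Finset (Fin m ⊕ Fin m)).card := Finset.card_image_le
      _ = 2 * m := hcard2m
  set BadS := univ.filter (fun a : IntMgon m n => MgBad a) with hBadS
  set Good := univ.filter (fun a : IntMgon m n => ¬ MgBad a) with hGood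
  have hBadcard : BadS.card ≤ m * m * n ^ (m - 2) := by
    have hinj : Set.InjOn ent (BadS : Set (IntMgon m n)) := fun a _ b _ h => ent_injective h
    rw [← Finset.card_image_of_injOn hinj]
    have hsub : BadS.image ent ⊆ (univ : Finset (Fin m × Fin m)).biUnion
        (fun z => if z.1 = z.2 then ∅ else (mgonF m n).filter fun f => f z.1 = f z.2) := by
      intro f hf
      obtain ⟨a, ha, rfl⟩ := Finset.mem_image.1 hf
      have hbad : MgBad a := (Finset.mem_filter.1 ha).2
      obtain ⟨p, q, hpq, hcol⟩ := bad_collision hm hbad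
      refine Finset.mem_biUnion.2 ⟨(p, q), mem_univ _, ?_⟩
      rw [if_neg hpq]
      exact Finset.mem_filter.2 ⟨ent_mem_mgonF a, hcol⟩
    calc (BadS.image ent).card
        ≤ _ := Finset.card_le_card hsub
      _ ≤ ∑ z ∈ (univ : Finset (Fin m × Fin m)),
            (if z.1 = z.2 then (∅ : Finset (Fin m → ℕ))
              else (mgonF m n).filter fun f => f z.1 = f z.2).card := Finset.card_biUnion_le
      _ ≤ ∑ _z ∈ (univ : Finset (Fin m × Fin m)), n ^ (m - 2) := by
          apply Finset.sum_le_sum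
          intro z _
          rcases eq_or_ne z.1 z.2 with h | h
          · simp [h]
          · rw [if_neg h]
            exact card_collide hm h
      _ = m * m * n ^ (m - 2) := by
          rw [Finset.sum_const, Finset.card_univ, Fintype.card_prod, Fintype.card_fin,
            smul_eq_mul]
  have hGoodcard : 2 * m * (Good.image mk).card ≤ (mgonF m n).card := by
    set t := Good.image mk with ht
    set s := univ.filter (fun x : IntMgon m n => mk x ∈ t) with hs
    have Hf : ∀ a ∈ s, mk a ∈ t := fun a ha => (Finset.mem_filter.1 ha).2
    have hfib : ∀ b ∈ t, 2 * m ≤ (s.filter fun x => mk x = b).card := by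
      intro b hb
      obtain ⟨a, ha, rfl⟩ := Finset.mem_image.1 hb
      have hgood : ¬ MgBad a := (Finset.mem_filter.1 ha).2
      have hinj := orbMap_inj hm hgood
      have hsub2 : univ.image (orbMap a) ⊆ s.filter fun x => mk x = mk a := by
        intro x hx
        obtain ⟨y, -, rfl⟩ := Finset.mem_image.1 hx
        have hr : mk (orbMap a y) = mk a := ((hmk_eq a (orbMap a y)).2 (rel_orbMap a y)).symm
        refine Finset.mem_filter.2 ⟨Finset.mem_filter.2 ⟨mem_univ _, ?_⟩, hr⟩
        rw [hr]
        exact hb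
      calc 2 * m = (univ : Finset (Fin m ⊕ Fin m)).card := hcard2m.symm
        _ = (univ.image (orbMap a)).card := (Finset.card_image_of_injective _ hinj).symm
        _ ≤ _ := Finset.card_le_card hsub2
    have h1 := Finset.mul_card_image_le_card_of_maps_to Hf (2 * m) hfib
    calc 2 * m * t.card ≤ s.card := h1
      _ ≤ (univ : Finset (IntMgon m n)).card := Finset.card_le_card (Finset.filter_subset _ _)
      _ = (mgonF m n).card := by rw [Finset.card_univ, hcardA]
  refine ⟨hlow, ?_⟩
  have hsplitU : (univ : Finset (IntMgon m n)) = BadS ∪ Good := by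
    rw [hBadS, hGood, Finset.filter_union_filter_not_eq]
  have hple : (univ.image mk).card ≤ (Good.image mk).card + BadS.card := by
    calc (univ.image mk).card = ((BadS ∪ Good).image mk).card := by rw [← hsplitU]
      _ = (BadS.image mk ∪ Good.image mk).card := by rw [Finset.image_union]
      _ ≤ (BadS.image mk).card + (Good.image mk).card := Finset.card_union_le _ _
      _ ≤ BadS.card + (Good.image mk).card := Nat.add_le_add_right Finset.card_image_le _
      _ = (Good.image mk).card + BadS.card := by ring
  calc 2 * m * mgonCount m n = 2 * m * ((univ : Finset (IntMgon m n)).image mk).card := by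
        rw [hcount]
    _ ≤ 2 * m * ((Good.image mk).card + BadS.card) := Nat.mul_le_mul_left _ hple
    _ = 2 * m * (Good.image mk).card + 2 * m * BadS.card := by ring
    _ ≤ (mgonF m n).card + 2 * m * (m * m * n ^ (m - 2)) :=
        Nat.add_le_add hGoodcard (Nat.mul_le_mul_left _ hBadcard)


end MgonAux

open MgonAux Finset in
/-- For fixed `m ≥ 3`, the number of inequivalent integer `m`-gons of perimeter `n`
is asymptotic to `((2^{m-1} - m)/(2^m·m!))·n^{m-1}`. -/
theorem mgonCount_asymptotic (m : ℕ) (hm : 3 ≤ m) :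
    Tendsto (fun n : ℕ => (mgonCount m n : ℝ) / (n : ℝ) ^ (m - 1)) atTop
      (nhds ((2 ^ (m - 1) - (m : ℝ)) / (2 ^ m * m.factorial))) := by
  classical
  set L : ℝ := (2 ^ (m - 1) - (m : ℝ)) / (2 ^ m * m.factorial) with hL
  set cA : ℝ := (1 : ℝ) ^ (m - 1) / (m - 1).factorial -
    m * ((1 / 2 : ℝ) ^ (m - 1) / (m - 1).factorial) with hcAdef
  have hu1 : Tendsto (fun n : ℕ => n - 1) atTop atTop := by
    apply tendsto_atTop_atTop.2
    intro b
    exact ⟨b + 1, fun a ha => by omega⟩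
  have hu2 : Tendsto (fun n : ℕ => n / 2) atTop atTop := by
    apply tendsto_atTop_atTop.2
    intro b
    exact ⟨2 * b, fun a ha => by omega⟩
  have hA1 := tendsto_choose_div (m - 1) (fun n => n - 1) 1 tendsto_sub_one_div hu1
  have hA2 := tendsto_choose_div (m - 1) (fun n => n / 2) (1 / 2) tendsto_half_div hu2
  have hAlim : Tendsto (fun n : ℕ => ((mgonF m n).card : ℝ) / (n : ℝ) ^ (m - 1)) atTop
      (nhds cA) := by
    have hsub := hA1.sub (hA2.const_mul (m : ℝ))
    apply hsub.congr'
    filter_upwards [eventually_ge_atTop (2 * m)] with n hn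
    have hcard := card_mgonF m n hm hn
    have hc : ((mgonF m n).card : ℝ) =
        (((n : ℕ) - 1).choose (m - 1) : ℝ) - m * ((n / 2 : ℕ).choose (m - 1) : ℝ) := by
      have h2 := congrArg (fun x : ℕ => (x : ℝ)) hcard
      push_cast at h2
      linarith
    rw [hc]
    ring
  have h2m : (0 : ℝ) < 2 * m := by positivity
  have hcA_L : cA / (2 * m) = L := by
    have hfact : (m.factorial : ℝ) = m * (m - 1).factorial := by
      rw [← Nat.mul_factorial_pred (by omega : m ≠ 0)]
      push_cast
      ring
    have hq : ((m - 1).factorial : ℝ) ≠ 0 := by positivity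
    have hp2 : ((2 : ℝ) ^ (m - 1)) ≠ 0 := by positivity
    have hmne : (m : ℝ) ≠ 0 := by positivity
    have h2pow : (2 : ℝ) ^ m = 2 * 2 ^ (m - 1) := by
      rw [← pow_succ']
      congr 1
      omega
    rw [hcAdef, hL, hfact, h2pow, one_pow, div_pow, one_pow]
    field_simp
  have hlow2 : Tendsto (fun n : ℕ => (((mgonF m n).card : ℝ) / (n : ℝ) ^ (m - 1)) / (2 * m))
      atTop (nhds L) := by
    rw [← hcA_L]
    exact hAlim.div_const _
  have hup2 : Tendsto (fun n : ℕ =>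
      (((mgonF m n).card : ℝ) / (n : ℝ) ^ (m - 1)) / (2 * m) + ((m : ℝ) * m) / n)
      atTop (nhds L) := by
    have h0 : Tendsto (fun n : ℕ => ((m : ℝ) * m) / n) atTop (nhds 0) :=
      tendsto_const_div_atTop_nhds_zero_nat _
    simpa using hlow2.add h0
  apply tendsto_of_tendsto_of_tendsto_of_le_of_le' hlow2 hup2
  · filter_upwards [eventually_ge_atTop 1] with n hn
    have hb := (count_bounds m n hm).1
    have hpow : (0 : ℝ) < (n : ℝ) ^ (m - 1) := by positivity
    have h1 : ((mgonF m n).card : ℝ) ≤ 2 * m * (mgonCount m n : ℝ) := by exact_mod_cast hb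
    have step : (((mgonF m n).card : ℝ) / (2 * m)) ≤ (mgonCount m n : ℝ) := by
      rw [div_le_iff₀ h2m]
      linarith
    calc ((mgonF m n).card : ℝ) / (n : ℝ) ^ (m - 1) / (2 * m)
        = (((mgonF m n).card : ℝ) / (2 * m)) / (n : ℝ) ^ (m - 1) := by ring
      _ ≤ (mgonCount m n : ℝ) / (n : ℝ) ^ (m - 1) :=
          div_le_div_of_nonneg_right step hpow.le
  · filter_upwards [eventually_ge_atTop 1] with n hn
    have hb := (count_bounds m n hm).2
    have hn0 : (0 : ℝ) < (n : ℝ) := by exact_mod_cast hn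
    have hpow : (0 : ℝ) < (n : ℝ) ^ (m - 1) := by positivity
    have hcast : 2 * (m : ℝ) * (mgonCount m n : ℝ) ≤
        ((mgonF m n).card : ℝ) + 2 * m * ((m : ℝ) * m * (n : ℝ) ^ (m - 2)) := by
      exact_mod_cast hb
    have hC : (mgonCount m n : ℝ) ≤
        ((mgonF m n).card : ℝ) / (2 * m) + (m : ℝ) * m * (n : ℝ) ^ (m - 2) := by
      rw [← sub_le_iff_le_add, le_div_iff₀ h2m]
      linarith
    have hpowsplit : (n : ℝ) ^ (m - 1) = (n : ℝ) ^ (m - 2) * n := by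
      rw [← pow_succ]
      congr 1
      omega
    calc (mgonCount m n : ℝ) / (n : ℝ) ^ (m - 1)
        ≤ (((mgonF m n).card : ℝ) / (2 * m) + (m : ℝ) * m * (n : ℝ) ^ (m - 2)) /
            (n : ℝ) ^ (m - 1) := div_le_div_of_nonneg_right hC hpow.le
      _ = ((mgonF m n).card : ℝ) / (n : ℝ) ^ (m - 1) / (2 * m) + ((m : ℝ) * m) / n := by
          rw [hpowsplit]
          have hne : (n : ℝ) ≠ 0 := ne_of_gt hn0
          have hpne : ((n : ℝ) ^ (m - 2)) ≠ 0 := by positivity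
          field_simp
end

section
/- The number of inequivalent integer quadrilaterals with perimeter n equals the nearest integer to (n³-3n²+20n)/96 if n is even, and the nearest integer to (n³-7n)/96 if n is odd. -/
/-- Integer quadrilaterals of perimeter `n`: 4-tuples of positive integers summing to
`n`, each entry strictly less than `n/2`, indexed cyclically by `ZMod 4`. -/
def IntQuad (n : ℕ) : Type :=
  {f : ZMod 4 → ℕ // (∀ i, 0 < f i ∧ 2 * f i < n) ∧ ∑ i, f i = n}

/-- Two quadrilaterals are equivalent iff one is obtained from the other by a cyclic
rotation and/or reversal of the four entries. -/
def QuadRel (n : ℕ) (a b : IntQuad n) : Prop :=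
  ∃ (c : ZMod 4) (ε : Bool), ∀ i, b.1 i = a.1 (if ε then c - i else c + i)

/-- The number of inequivalent integer quadrilaterals with perimeter `n`. -/
noncomputable def quadCount (n : ℕ) : ℕ := Nat.card (Quot (QuadRel n))


open Finset

/-- auxiliary: all quadruples (a,b,c,d) of positive integers with 2x<n and sum n -/
def qBase (n : ℕ) : Finset (ℕ × ℕ × ℕ × ℕ) :=
  (range n ×ˢ (range n ×ˢ (range n ×ˢ range n))).filter
    (fun p => 0 < p.1 ∧ 2*p.1 < n ∧ 0 < p.2.1 ∧ 2*p.2.1 < n ∧ 0 < p.2.2.1 ∧ 2*p.2.2.1 < n ∧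
      0 < p.2.2.2 ∧ 2*p.2.2.2 < n ∧ p.1 + p.2.1 + p.2.2.1 + p.2.2.2 = n)

lemma mem_qBase {n : ℕ} {p : ℕ × ℕ × ℕ × ℕ} : p ∈ qBase n ↔
    0 < p.1 ∧ 2*p.1 < n ∧ 0 < p.2.1 ∧ 2*p.2.1 < n ∧ 0 < p.2.2.1 ∧ 2*p.2.2.1 < n ∧
      0 < p.2.2.2 ∧ 2*p.2.2.2 < n ∧ p.1 + p.2.1 + p.2.2.1 + p.2.2.2 = n := by
  obtain ⟨a, b, c, d⟩ := p
  simp only [qBase, Finset.mem_filter, Finset.mem_product, Finset.mem_range]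
  omega

def qS (n : ℕ) : Finset (ℕ × ℕ × ℕ × ℕ) :=
  (qBase n).filter (fun p => p.1 ≤ p.2.2.1 ∧ p.2.1 ≤ p.2.2.2 ∧
    (p.1 < p.2.1 ∨ (p.1 = p.2.1 ∧ p.2.2.1 ≤ p.2.2.2)))
def qX (n : ℕ) : Finset (ℕ × ℕ × ℕ × ℕ) := (qBase n).filter (fun p => p.1 ≤ p.2.2.1)
def qT (n : ℕ) : Finset (ℕ × ℕ × ℕ × ℕ) :=
  (qBase n).filter (fun p => p.1 ≤ p.2.2.1 ∧ p.2.1 ≤ p.2.2.2)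
def qXE (n : ℕ) : Finset (ℕ × ℕ × ℕ × ℕ) :=
  (qBase n).filter (fun p => p.1 ≤ p.2.2.1 ∧ p.2.1 = p.2.2.2)
def qA1 (n : ℕ) : Finset (ℕ × ℕ × ℕ × ℕ) := (qBase n).filter (fun p => p.1 = p.2.2.1)
def qA2 (n : ℕ) : Finset (ℕ × ℕ × ℕ × ℕ) := (qBase n).filter (fun p => p.2.1 = p.2.2.2)
def qE (n : ℕ) : Finset (ℕ × ℕ × ℕ × ℕ) :=
  (qBase n).filter (fun p => p.1 = p.2.2.1 ∧ p.2.1 = p.2.2.2)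
def qF (n : ℕ) : Finset (ℕ × ℕ × ℕ × ℕ) :=
  (qBase n).filter (fun p => p.1 ≤ p.2.2.1 ∧ p.2.1 ≤ p.2.2.2 ∧ p.1 = p.2.1 ∧ p.2.2.1 = p.2.2.2)

lemma involution_count {α : Type*} [DecidableEq α] (U S F : Finset α) (σ : α → α)
    (hSU : S ⊆ U) (hFS : F ⊆ S)
    (hσU : ∀ x ∈ U, σ x ∈ U)
    (hinv : ∀ x ∈ U, σ (σ x) = x)
    (hcov : ∀ x ∈ U, x ∈ S ∨ σ x ∈ S)
    (hdis : ∀ x ∈ S, σ x ∈ S → σ x = x)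
    (hFmem : ∀ x ∈ S, (x ∈ F ↔ σ x = x)) :
    U.card + F.card = 2 * S.card := by
  have himg : U = S ∪ (S \ F).image σ := by
    ext x
    constructor
    · intro hx
      by_cases hxS : x ∈ S
      · exact mem_union_left _ hxS
      · rcases hcov x hx with h | h
        · exact absurd h hxS
        · refine mem_union_right _ (mem_image.mpr ⟨σ x, mem_sdiff.mpr ⟨h, ?_⟩, hinv x hx⟩)
          intro hF
          have h1 : σ (σ x) = σ x := (hFmem _ h).mp hF
          rw [hinv x hx] at h1
          exact hxS (h1 ▸ h)
    · intro hx
      rcases mem_union.mp hx with h | h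
      · exact hSU h
      · obtain ⟨z, hz, rfl⟩ := mem_image.mp h
        exact hσU z (hSU (mem_sdiff.mp hz).1)
  have hdisj : Disjoint S ((S \ F).image σ) := by
    rw [Finset.disjoint_left]
    intro x hxS hximg
    obtain ⟨z, hz, rfl⟩ := mem_image.mp hximg
    obtain ⟨hzS, hzF⟩ := mem_sdiff.mp hz
    have h1 : σ z = z := hdis z hzS hxS
    exact hzF ((hFmem z hzS).mpr h1)
  have hinj : Set.InjOn σ (S \ F : Finset α) := by
    intro x hx y hy hxy
    have hx' := hSU (mem_sdiff.mp (by simpa using hx)).1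
    have hy' := hSU (mem_sdiff.mp (by simpa using hy)).1
    rw [← hinv x hx', hxy, hinv y hy']
  have hc : U.card = S.card + ((S \ F).card) := by
    rw [himg, card_union_of_disjoint hdisj, Finset.card_image_of_injOn hinj]
  have := Finset.card_sdiff_of_subset hFS
  have := Finset.card_le_card hFS
  omega

lemma key_count (n : ℕ) :
    (qBase n).card + 2 * (qA1 n).card + (qE n).card + 4 * (qF n).card = 8 * (qS n).card := by
  have e1 : (qBase n).card + (qA1 n).card = 2 * (qX n).card := by
    apply involution_count _ _ _ (fun p => (p.2.2.1, p.2.1, p.1, p.2.2.2)) <;>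
      (intro x hx; obtain ⟨a,b,c,d⟩ := x;
       simp only [qX, qA1, Finset.mem_filter, mem_qBase, Prod.mk.injEq, true_and, and_true] at hx ⊢; try omega)
  have e2 : (qX n).card + (qXE n).card = 2 * (qT n).card := by
    apply involution_count _ _ _ (fun p => (p.1, p.2.2.2, p.2.2.1, p.2.1)) <;>
      (intro x hx; obtain ⟨a,b,c,d⟩ := x;
       simp only [qX, qXE, qT, Finset.mem_filter, mem_qBase, Prod.mk.injEq, true_and, and_true] at hx ⊢; try omega)
  have e3 : (qA2 n).card + (qE n).card = 2 * (qXE n).card := by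
    apply involution_count _ _ _ (fun p => (p.2.2.1, p.2.1, p.1, p.2.2.2)) <;>
      (intro x hx; obtain ⟨a,b,c,d⟩ := x;
       simp only [qA2, qE, qXE, Finset.mem_filter, mem_qBase, Prod.mk.injEq, true_and, and_true] at hx ⊢; try omega)
  have e4 : (qT n).card + (qF n).card = 2 * (qS n).card := by
    apply involution_count _ _ _ (fun p => (p.2.1, p.1, p.2.2.2, p.2.2.1)) <;>
      (intro x hx; obtain ⟨a,b,c,d⟩ := x;
       simp only [qT, qF, qS, Finset.mem_filter, mem_qBase, Prod.mk.injEq, true_and, and_true] at hx ⊢; try omega)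
  have e5 : (qA2 n).card = (qA1 n).card := by
    apply Finset.card_nbij' (i := fun p => (p.2.2.2, p.1, p.2.1, p.2.2.1))
      (j := fun p => (p.2.1, p.2.2.1, p.2.2.2, p.1)) <;>
      (intro x hx; obtain ⟨a,b,c,d⟩ := x;
       simp only [qA1, qA2, Finset.mem_coe, Finset.mem_filter, mem_qBase, Prod.mk.injEq, true_and, and_true] at hx ⊢; try omega)
  omega

-- sum helpers
lemma hsum_sq (m : ℕ) : 6 * ∑ s ∈ range (m+1), s*s = m*(m+1)*(2*m+1) := by
  induction m with
  | zero => simp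
  | succ k ih => rw [Finset.sum_range_succ, Nat.mul_add, ih]; ring

lemma hsum_ppred (m : ℕ) : 3 * ∑ s ∈ range (m+1), (s+1)*s = m*(m+1)*(m+2) := by
  induction m with
  | zero => simp
  | succ k ih => rw [Finset.sum_range_succ, Nat.mul_add, ih]; ring

lemma shift_sq (m : ℕ) : ∑ s ∈ range (m+1), (s-1)*(s-1) = ∑ s ∈ range m, s*s := by
  rw [Finset.sum_range_succ']
  simp

lemma shift_ppred (m : ℕ) : ∑ s ∈ range (m+1), s*(s-1) = ∑ s ∈ range m, (s+1)*s := by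
  rw [Finset.sum_range_succ']
  simp

/-- the number of pairs (a,c) with 1 ≤ a,c ≤ h and a + c = s -/
def qc2 (h s : ℕ) : ℕ := min h (s-1) + 1 - max 1 (s-h)

def qP (h s : ℕ) : Finset (ℕ × ℕ) := ((Icc 1 h) ×ˢ (Icc 1 h)).filter (fun q => q.1 + q.2 = s)

lemma card_qP (h s : ℕ) : (qP h s).card = qc2 h s := by
  have : (qP h s).card = (Icc (max 1 (s-h)) (min h (s-1))).card := by
    apply Finset.card_nbij' (i := fun q => q.1) (j := fun a => (a, s - a)) <;>
      (intro x hx;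
       simp only [qP, Finset.mem_coe, Finset.mem_filter, Finset.mem_product, Finset.mem_Icc, Prod.mk.injEq,
         Prod.ext_iff, true_and, and_true] at hx ⊢; try omega)
  rw [this, Nat.card_Icc, qc2]

lemma conv_even (h : ℕ) :
    3 * ∑ s ∈ range (2*h+3), qc2 h s * qc2 h (2*h+2 - s) = h*(2*h*h+1) := by
  rw [range_eq_Ico, ← Finset.sum_Ico_consecutive _ (Nat.zero_le (h+1)) (by omega : h+1 ≤ 2*h+3)]
  have p1 : ∑ s ∈ Ico 0 (h+1), qc2 h s * qc2 h (2*h+2 - s)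
      = ∑ s ∈ range (h+1), (s-1)*(s-1) := by
    rw [← range_eq_Ico]
    refine Finset.sum_congr rfl (fun s hs => ?_)
    rw [Finset.mem_range] at hs
    have e1 : qc2 h s = s - 1 := by simp only [qc2]; omega
    have e2 : qc2 h (2*h+2 - s) = s - 1 := by simp only [qc2]; omega
    rw [e1, e2]
  have p2 : ∑ s ∈ Ico (h+1) (2*h+3), qc2 h s * qc2 h (2*h+2 - s)
      = ∑ s ∈ range (h+2), (s-1)*(s-1) := by
    rw [Finset.sum_Ico_eq_sum_range]
    have e3 : 2*h+3 - (h+1) = h + 2 := by omega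
    rw [e3]
    rw [← Finset.sum_range_reflect (fun j => (j-1)*(j-1)) (h+2)]
    refine Finset.sum_congr rfl (fun i hi => ?_)
    rw [Finset.mem_range] at hi
    have e1 : qc2 h (h+1+i) = h - i := by simp only [qc2]; omega
    have e2 : qc2 h (2*h+2 - (h+1+i)) = h - i := by simp only [qc2]; omega
    rw [e1, e2]
    have : h + 2 - 1 - i - 1 = h - i := by omega
    rw [this]
  rw [p1, p2, shift_sq, shift_sq]
  rcases Nat.eq_zero_or_pos h with rfl | hpos
  · simp
  · obtain ⟨g, rfl⟩ : ∃ g, h = g + 1 := ⟨h - 1, by omega⟩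
    apply Nat.eq_of_mul_eq_mul_left (show 0 < 2 by norm_num)
    have e1 := hsum_sq g
    have e2 := hsum_sq (g+1)
    calc 2 * (3 * (∑ s ∈ range (g+1), s*s + ∑ s ∈ range (g+1+1), s*s))
        = 6 * ∑ s ∈ range (g+1), s*s + 6 * ∑ s ∈ range (g+1+1), s*s := by ring
      _ = g*(g+1)*(2*g+1) + (g+1)*(g+1+1)*(2*(g+1)+1) := by rw [e1, e2]
      _ = 2 * ((g+1)*(2*(g+1)*(g+1)+1)) := by ring

lemma conv_odd (h : ℕ) :
    3 * ∑ s ∈ range (2*h+2), qc2 h s * qc2 h (2*h+1 - s) + 2*h = 2*h*h*h := by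
  rw [range_eq_Ico, ← Finset.sum_Ico_consecutive _ (Nat.zero_le (h+1)) (by omega : h+1 ≤ 2*h+2)]
  have p1 : ∑ s ∈ Ico 0 (h+1), qc2 h s * qc2 h (2*h+1 - s)
      = ∑ s ∈ range (h+1), s*(s-1) := by
    rw [← range_eq_Ico]
    refine Finset.sum_congr rfl (fun s hs => ?_)
    rw [Finset.mem_range] at hs
    have e1 : qc2 h s = s - 1 := by simp only [qc2]; omega
    have e2 : qc2 h (2*h+1 - s) = s := by simp only [qc2]; omega
    rw [e1, e2]
    ring
  have p2 : ∑ s ∈ Ico (h+1) (2*h+2), qc2 h s * qc2 h (2*h+1 - s)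
      = ∑ s ∈ range (h+1), s*(s-1) := by
    rw [Finset.sum_Ico_eq_sum_range]
    have e3 : 2*h+2 - (h+1) = h + 1 := by omega
    rw [e3]
    rw [← Finset.sum_range_reflect (fun j => j*(j-1)) (h+1)]
    refine Finset.sum_congr rfl (fun i hi => ?_)
    rw [Finset.mem_range] at hi
    have e1 : qc2 h (h+1+i) = h - i := by simp only [qc2]; omega
    have e2 : qc2 h (2*h+1 - (h+1+i)) = h - i - 1 := by simp only [qc2]; omega
    rw [e1, e2]
    have : h + 1 - 1 - i = h - i := by omega
    rw [this]
  rw [p1, p2, shift_ppred]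
  rcases Nat.eq_zero_or_pos h with rfl | hpos
  · simp
  · obtain ⟨g, rfl⟩ : ∃ g, h = g + 1 := ⟨h - 1, by omega⟩
    have e1 := hsum_ppred g
    calc 3 * (∑ s ∈ range (g+1), (s+1)*s + ∑ s ∈ range (g+1), (s+1)*s) + 2*(g+1)
        = (3 * ∑ s ∈ range (g+1), (s+1)*s) * 2 + 2*(g+1) := by ring
      _ = (g*(g+1)*(g+2)) * 2 + 2*(g+1) := by rw [e1]
      _ = 2*(g+1)*(g+1)*(g+1) := by ring

lemma card_filter_odd (h : ℕ) : ((Icc 1 h).filter (fun x => x % 2 = 1)).card = (h+1)/2 := by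
  induction h with
  | zero => simp
  | succ k ih =>
    rw [show Icc 1 (k+1) = insert (k+1) (Icc 1 k) from (Finset.insert_Icc_right_eq_Icc_add_one (by omega)).symm,
      Finset.filter_insert]
    by_cases hp : (k+1) % 2 = 1
    · rw [if_pos hp, Finset.card_insert_of_notMem (by simp [Finset.mem_Icc]), ih]
      omega
    · rw [if_neg hp, ih]
      omega

lemma card_filter_even (h : ℕ) : ((Icc 1 h).filter (fun x => x % 2 = 0)).card = h/2 := by
  induction h with
  | zero => simp
  | succ k ih =>
    rw [show Icc 1 (k+1) = insert (k+1) (Icc 1 k) from (Finset.insert_Icc_right_eq_Icc_add_one (by omega)).symm,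
      Finset.filter_insert]
    by_cases hp : (k+1) % 2 = 0
    · rw [if_pos hp, Finset.card_insert_of_notMem (by simp [Finset.mem_Icc]), ih]
      omega
    · rw [if_neg hp, ih]
      omega

def qPar (h r : ℕ) : Finset (ℕ × ℕ) :=
  ((Icc 1 h) ×ˢ (Icc 1 h)).filter (fun q => (q.1 + q.2) % 2 = r)

lemma card_qPar_odd (h : ℕ) : (qPar h 1).card = 2 * (((h+1)/2) * (h/2)) := by
  have hset : qPar h 1 =
      (((Icc 1 h).filter (fun x => x % 2 = 1)) ×ˢ ((Icc 1 h).filter (fun x => x % 2 = 0))) ∪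
      (((Icc 1 h).filter (fun x => x % 2 = 0)) ×ˢ ((Icc 1 h).filter (fun x => x % 2 = 1))) := by
    ext ⟨u, v⟩
    simp only [qPar, Finset.mem_filter, Finset.mem_product, Finset.mem_union, Finset.mem_Icc]
    omega
  rw [hset, Finset.card_union_of_disjoint, Finset.card_product, Finset.card_product,
    card_filter_odd, card_filter_even]
  · ring
  · rw [Finset.disjoint_left]
    rintro ⟨u, v⟩ h1 h2
    simp only [Finset.mem_product, Finset.mem_filter, Finset.mem_Icc] at h1 h2
    omega

lemma card_qPar_even (h : ℕ) : (qPar h 0).card = ((h+1)/2) * ((h+1)/2) + (h/2) * (h/2) := by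
  have hset : qPar h 0 =
      (((Icc 1 h).filter (fun x => x % 2 = 1)) ×ˢ ((Icc 1 h).filter (fun x => x % 2 = 1))) ∪
      (((Icc 1 h).filter (fun x => x % 2 = 0)) ×ˢ ((Icc 1 h).filter (fun x => x % 2 = 0))) := by
    ext ⟨u, v⟩
    simp only [qPar, Finset.mem_filter, Finset.mem_product, Finset.mem_union, Finset.mem_Icc]
    omega
  rw [hset, Finset.card_union_of_disjoint, Finset.card_product, Finset.card_product,
    card_filter_odd, card_filter_even]
  · rw [Finset.disjoint_left]
    rintro ⟨u, v⟩ h1 h2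
    simp only [Finset.mem_product, Finset.mem_filter, Finset.mem_Icc] at h1 h2
    omega

lemma card_qBase (n : ℕ) :
    (qBase n).card = ∑ s ∈ range (n+1), qc2 ((n-1)/2) s * qc2 ((n-1)/2) (n - s) := by
  rw [Finset.card_eq_sum_card_fiberwise (f := fun p => p.1 + p.2.2.1) (t := range (n+1))
    (fun x hx => by
      obtain ⟨a, b, c, d⟩ := x
      rw [Finset.mem_coe, mem_qBase] at hx
      simp only [Finset.mem_coe, Finset.mem_range]
      dsimp only at hx ⊢
      omega)]
  refine Finset.sum_congr rfl (fun s hs => ?_)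
  rw [Finset.mem_range] at hs
  rw [← card_qP, ← card_qP, ← Finset.card_product]
  apply Finset.card_nbij' (i := fun p => ((p.1, p.2.2.1), (p.2.1, p.2.2.2)))
    (j := fun q => (q.1.1, q.2.1, q.1.2, q.2.2))
  case hi =>
    rintro ⟨a, b, c, d⟩ hx
    simp only [qP, Finset.mem_coe, Finset.mem_filter, Finset.mem_product, Finset.mem_Icc, mem_qBase, true_and, and_true] at hx ⊢
    try dsimp only at *
    omega
  case hj =>
    rintro ⟨⟨a, c⟩, b, d⟩ hx
    simp only [qP, Finset.mem_coe, Finset.mem_filter, Finset.mem_product, Finset.mem_Icc, mem_qBase, true_and, and_true] at hx ⊢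
    try dsimp only at *
    omega
  case left_inv => rintro ⟨a, b, c, d⟩ _; rfl
  case right_inv => rintro ⟨⟨a, c⟩, b, d⟩ _; rfl

lemma card_qA1 (n : ℕ) : (qA1 n).card = (qPar ((n-1)/2) (n % 2)).card := by
  apply Finset.card_nbij' (i := fun p => (p.2.1, p.2.2.2))
    (j := fun q => ((n - q.1 - q.2)/2, q.1, (n - q.1 - q.2)/2, q.2))
  case hi =>
    rintro ⟨a, b, c, d⟩ hx
    simp only [qA1, qPar, Finset.mem_coe, Finset.mem_filter, Finset.mem_product, Finset.mem_Icc,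
      mem_qBase, true_and, and_true] at hx ⊢
    try dsimp only at *
    omega
  case hj =>
    rintro ⟨u, v⟩ hx
    simp only [qA1, qPar, Finset.mem_coe, Finset.mem_filter, Finset.mem_product, Finset.mem_Icc,
      mem_qBase, true_and, and_true] at hx ⊢
    try dsimp only at *
    omega
  case left_inv =>
    rintro ⟨a, b, c, d⟩ hx
    simp only [qA1, Finset.mem_coe, Finset.mem_filter, mem_qBase] at hx
    simp only [Prod.mk.injEq, true_and, and_true]
    try dsimp only at *
    omega
  case right_inv => rintro ⟨u, v⟩ _; rfl

lemma card_qE_even (n : ℕ) (hn : n % 2 = 0) : (qE n).card = n/2 - 1 := by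
  have : (qE n).card = (Icc 1 (n/2 - 1)).card := by
    apply Finset.card_nbij' (i := fun p => p.1) (j := fun a => (a, n/2 - a, a, n/2 - a))
    case hi =>
      rintro ⟨a, b, c, d⟩ hx
      simp only [qE, Finset.mem_coe, Finset.mem_filter, mem_qBase] at hx
      simp only [Finset.mem_coe, Finset.mem_Icc, true_and, and_true]
      try dsimp only at *
      omega
    case hj =>
      intro u hx
      simp only [Finset.mem_coe, Finset.mem_Icc, true_and, and_true] at hx
      simp only [qE, Finset.mem_coe, Finset.mem_filter, mem_qBase, true_and, and_true]
      try dsimp only at *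
      omega
    case left_inv =>
      rintro ⟨a, b, c, d⟩ hx
      simp only [qE, Finset.mem_coe, Finset.mem_filter, mem_qBase] at hx
      simp only [Prod.mk.injEq, true_and, and_true]
      try dsimp only at *
      omega
    case right_inv => intro u hx; rfl
  rw [this, Nat.card_Icc]
  try dsimp only at *
  omega

lemma card_qE_odd (n : ℕ) (hn : n % 2 = 1) : (qE n).card = 0 := by
  rw [Finset.card_eq_zero, Finset.eq_empty_iff_forall_notMem]
  rintro ⟨a, b, c, d⟩ hx
  simp only [qE, Finset.mem_filter, mem_qBase] at hx
  try dsimp only at *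
  omega

lemma card_qF_even (n : ℕ) (hn : n % 2 = 0) : (qF n).card = n/4 := by
  have : (qF n).card = (Icc 1 (n/4)).card := by
    apply Finset.card_nbij' (i := fun p => p.1) (j := fun a => (a, a, n/2 - a, n/2 - a))
    case hi =>
      rintro ⟨a, b, c, d⟩ hx
      simp only [qF, Finset.mem_coe, Finset.mem_filter, mem_qBase] at hx
      simp only [Finset.mem_coe, Finset.mem_Icc, true_and, and_true]
      try dsimp only at *
      omega
    case hj =>
      intro u hx
      simp only [Finset.mem_coe, Finset.mem_Icc, true_and, and_true] at hx
      simp only [qF, Finset.mem_coe, Finset.mem_filter, mem_qBase, true_and, and_true]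
      try dsimp only at *
      omega
    case left_inv =>
      rintro ⟨a, b, c, d⟩ hx
      simp only [qF, Finset.mem_coe, Finset.mem_filter, mem_qBase] at hx
      simp only [Prod.mk.injEq, true_and, and_true]
      try dsimp only at *
      omega
    case right_inv => intro u hx; rfl
  rw [this, Nat.card_Icc]
  try dsimp only at *
  omega

lemma card_qF_odd (n : ℕ) (hn : n % 2 = 1) : (qF n).card = 0 := by
  rw [Finset.card_eq_zero, Finset.eq_empty_iff_forall_notMem]
  rintro ⟨a, b, c, d⟩ hx
  simp only [qF, Finset.mem_filter, mem_qBase] at hx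
  try dsimp only at *
  omega
-- final assembly (appended after main.lean content)

lemma round_div96 (m k : ℤ) (h1 : 96*k - 48 ≤ m) (h2 : m < 96*k + 48) :
    round ((m:ℚ)/96) = k := by
  rw [round_eq]
  have e : (m:ℚ)/96 + 1/2 = ((m:ℚ) + 48)/96 := by ring
  rw [e]
  rw [Int.floor_eq_iff]
  constructor
  · rw [le_div_iff₀ (by norm_num : (0:ℚ) < 96)]
    have : (k:ℚ) * 96 ≤ (m:ℚ) + 48 := by exact_mod_cast (by linarith : k * 96 ≤ m + 48)
    linarith
  · rw [div_lt_iff₀ (by norm_num : (0:ℚ) < 96)]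
    have : (m:ℚ) + 48 < ((k:ℚ) + 1) * 96 := by exact_mod_cast (by linarith : m + 48 < (k+1) * 96)
    linarith

lemma qS_val_mod0 (k : ℕ) (hk : 0 < k) :
    96 * (((qS (4*k)).card : ℤ)) = (4*k:ℤ)^3 - 3*(4*k:ℤ)^2 + 20*(4*k:ℤ) := by
  obtain ⟨j, rfl⟩ : ∃ j, k = j + 1 := ⟨k - 1, by omega⟩
  set n := 4 * (j + 1) with hn
  have hB : 3 * (qBase n).card = (2*j+1)*(2*(2*j+1)*(2*j+1)+1) := by
    rw [card_qBase]
    have h1 : (n-1)/2 = 2*j+1 := by omega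
    rw [h1]
    have := conv_even (2*j+1)
    rw [show 2*(2*j+1)+3 = n+1 by omega, show 2*(2*j+1)+2 = n by omega] at this
    exact this
  have hA : (qA1 n).card = (j+1)*(j+1) + j*j := by
    rw [card_qA1, show n % 2 = 0 by omega, card_qPar_even]
    have e1 : ((n-1)/2+1)/2 = j+1 := by omega
    have e2 : ((n-1)/2)/2 = j := by omega
    rw [e1, e2]
  have hE : (qE n).card = 2*j+1 := by
    rw [card_qE_even _ (by omega)]; omega
  have hF : (qF n).card = j+1 := by
    rw [card_qF_even _ (by omega)]; omega
  have hkey := key_count n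
  rw [hA, hE, hF] at hkey
  have hkeyZ : ((qBase n).card : ℤ) + 2*(((j:ℤ)+1)*((j:ℤ)+1) + (j:ℤ)*(j:ℤ)) + (2*(j:ℤ)+1)
      + 4*((j:ℤ)+1) = 8 * ((qS n).card : ℤ) := by exact_mod_cast congrArg (Nat.cast : ℕ → ℤ) hkey
  have hBZ : 3 * ((qBase n).card : ℤ) = (2*(j:ℤ)+1)*(2*(2*(j:ℤ)+1)*(2*(j:ℤ)+1)+1) := by
    exact_mod_cast congrArg (Nat.cast : ℕ → ℤ) hB
  push_cast
  linear_combination (-12) * hkeyZ + 4 * hBZ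

lemma qS_val_mod2 (k : ℕ) :
    96 * (((qS (4*k+2)).card : ℤ)) = (4*k+2:ℤ)^3 - 3*(4*k+2:ℤ)^2 + 20*(4*k+2:ℤ) - 36 := by
  set n := 4 * k + 2 with hn
  have hB : 3 * (qBase n).card = (2*k)*(2*(2*k)*(2*k)+1) := by
    rw [card_qBase]
    have h1 : (n-1)/2 = 2*k := by omega
    rw [h1]
    have := conv_even (2*k)
    rw [show 2*(2*k)+3 = n+1 by omega, show 2*(2*k)+2 = n by omega] at this
    exact this
  have hA : (qA1 n).card = k*k + k*k := by
    rw [card_qA1, show n % 2 = 0 by omega, card_qPar_even]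
    have e1 : ((n-1)/2+1)/2 = k := by omega
    have e2 : ((n-1)/2)/2 = k := by omega
    rw [e1, e2]
  have hE : (qE n).card = 2*k := by
    rw [card_qE_even _ (by omega)]; omega
  have hF : (qF n).card = k := by
    rw [card_qF_even _ (by omega)]; omega
  have hkey := key_count n
  rw [hA, hE, hF] at hkey
  have hkeyZ : ((qBase n).card : ℤ) + 2*((k:ℤ)*(k:ℤ) + (k:ℤ)*(k:ℤ)) + 2*(k:ℤ)
      + 4*(k:ℤ) = 8 * ((qS n).card : ℤ) := by exact_mod_cast congrArg (Nat.cast : ℕ → ℤ) hkey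
  have hBZ : 3 * ((qBase n).card : ℤ) = (2*(k:ℤ))*(2*(2*(k:ℤ))*(2*(k:ℤ))+1) := by
    exact_mod_cast congrArg (Nat.cast : ℕ → ℤ) hB
  push_cast
  linear_combination (-12) * hkeyZ + 4 * hBZ

lemma qS_val_mod1 (k : ℕ) :
    96 * (((qS (4*k+1)).card : ℤ)) = (4*k+1:ℤ)^3 - 7*(4*k+1:ℤ) + 6 := by
  set n := 4 * k + 1 with hn
  have hB : 3 * (qBase n).card + 2*(2*k) = 2*(2*k)*(2*k)*(2*k) := by
    rw [card_qBase]
    have h1 : (n-1)/2 = 2*k := by omega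
    rw [h1]
    have := conv_odd (2*k)
    rw [show 2*(2*k)+2 = n+1 by omega, show 2*(2*k)+1 = n by omega] at this
    exact this
  have hA : (qA1 n).card = 2*(k*k) := by
    rw [card_qA1, show n % 2 = 1 by omega, card_qPar_odd]
    have e1 : ((n-1)/2+1)/2 = k := by omega
    have e2 : ((n-1)/2)/2 = k := by omega
    rw [e1, e2]
  have hE : (qE n).card = 0 := card_qE_odd _ (by omega)
  have hF : (qF n).card = 0 := card_qF_odd _ (by omega)
  have hkey := key_count n
  rw [hA, hE, hF] at hkey
  have hkeyZ : ((qBase n).card : ℤ) + 2*(2*((k:ℤ)*(k:ℤ))) + 0 + 4*0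
      = 8 * ((qS n).card : ℤ) := by exact_mod_cast congrArg (Nat.cast : ℕ → ℤ) hkey
  have hBZ : 3 * ((qBase n).card : ℤ) + 2*(2*(k:ℤ)) = 2*(2*(k:ℤ))*(2*(k:ℤ))*(2*(k:ℤ)) := by
    exact_mod_cast congrArg (Nat.cast : ℕ → ℤ) hB
  push_cast
  linear_combination (-12) * hkeyZ + 4 * hBZ

lemma qS_val_mod3 (k : ℕ) :
    96 * (((qS (4*k+3)).card : ℤ)) = (4*k+3:ℤ)^3 - 7*(4*k+3:ℤ) - 6 := by
  set n := 4 * k + 3 with hn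
  have hB : 3 * (qBase n).card + 2*(2*k+1) = 2*(2*k+1)*(2*k+1)*(2*k+1) := by
    rw [card_qBase]
    have h1 : (n-1)/2 = 2*k+1 := by omega
    rw [h1]
    have := conv_odd (2*k+1)
    rw [show 2*(2*k+1)+2 = n+1 by omega, show 2*(2*k+1)+1 = n by omega] at this
    exact this
  have hA : (qA1 n).card = 2*((k+1)*k) := by
    rw [card_qA1, show n % 2 = 1 by omega, card_qPar_odd]
    have e1 : ((n-1)/2+1)/2 = k+1 := by omega
    have e2 : ((n-1)/2)/2 = k := by omega
    rw [e1, e2]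
  have hE : (qE n).card = 0 := card_qE_odd _ (by omega)
  have hF : (qF n).card = 0 := card_qF_odd _ (by omega)
  have hkey := key_count n
  rw [hA, hE, hF] at hkey
  have hkeyZ : ((qBase n).card : ℤ) + 2*(2*(((k:ℤ)+1)*(k:ℤ))) + 0 + 4*0
      = 8 * ((qS n).card : ℤ) := by exact_mod_cast congrArg (Nat.cast : ℕ → ℤ) hkey
  have hBZ : 3 * ((qBase n).card : ℤ) + 2*(2*(k:ℤ)+1) = 2*(2*(k:ℤ)+1)*(2*(k:ℤ)+1)*(2*(k:ℤ)+1) := by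
    exact_mod_cast congrArg (Nat.cast : ℕ → ℤ) hB
  push_cast
  linear_combination (-12) * hkeyZ + 4 * hBZ

lemma sum_zmod4 (f : ZMod 4 → ℕ) : ∑ i, f i = f 0 + f 1 + f 2 + f 3 := by
  have huniv : (Finset.univ : Finset (ZMod 4)) = {0, 1, 2, 3} := by decide
  rw [huniv, Finset.sum_insert (by decide), Finset.sum_insert (by decide),
    Finset.sum_insert (by decide), Finset.sum_singleton]
  ring

def quadFun (p : ℕ × ℕ × ℕ × ℕ) : ZMod 4 → ℕ := ![p.1, p.2.1, p.2.2.1, p.2.2.2]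

def toQuad (n : ℕ) (p : ℕ × ℕ × ℕ × ℕ) (hp : p ∈ qBase n) : IntQuad n := by
  refine ⟨quadFun p, fun i => ?_, ?_⟩
  · rw [mem_qBase] at hp
    fin_cases i
    · exact (show 0 < p.1 ∧ 2 * p.1 < n by omega)
    · exact (show 0 < p.2.1 ∧ 2 * p.2.1 < n by omega)
    · exact (show 0 < p.2.2.1 ∧ 2 * p.2.2.1 < n by omega)
    · exact (show 0 < p.2.2.2 ∧ 2 * p.2.2.2 < n by omega)
  · rw [mem_qBase] at hp
    rw [sum_zmod4]
    exact (show p.1 + p.2.1 + p.2.2.1 + p.2.2.2 = n by omega)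

lemma quadRel_equiv (n : ℕ) : Equivalence (QuadRel n) := by
  constructor
  · intro x
    exact ⟨0, false, fun i => show x.1 i = x.1 (0 + i) by rw [zero_add]⟩
  · rintro x y ⟨c, ε, H⟩
    cases ε
    · refine ⟨-c, false, fun i => ?_⟩
      have H2 : ∀ j, y.1 j = x.1 (c + j) := H
      show x.1 i = y.1 (-c + i)
      rw [H2]
      congr 1
      ring
    · refine ⟨c, true, fun i => ?_⟩
      have H2 : ∀ j, y.1 j = x.1 (c - j) := H
      show x.1 i = y.1 (c - i)
      rw [H2]
      congr 1
      ring
  · rintro x y z ⟨c, ε, H⟩ ⟨c', ε', H'⟩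
    cases ε <;> cases ε'
    · refine ⟨c + c', false, fun i => ?_⟩
      have H2 : ∀ j, y.1 j = x.1 (c + j) := H
      have H2' : ∀ j, z.1 j = y.1 (c' + j) := H'
      show z.1 i = x.1 (c + c' + i)
      rw [H2', H2]
      congr 1
      ring
    · refine ⟨c + c', true, fun i => ?_⟩
      have H2 : ∀ j, y.1 j = x.1 (c + j) := H
      have H2' : ∀ j, z.1 j = y.1 (c' - j) := H'
      show z.1 i = x.1 (c + c' - i)
      rw [H2', H2]
      congr 1
      ring
    · refine ⟨c - c', true, fun i => ?_⟩
      have H2 : ∀ j, y.1 j = x.1 (c - j) := H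
      have H2' : ∀ j, z.1 j = y.1 (c' + j) := H'
      show z.1 i = x.1 (c - c' - i)
      rw [H2', H2]
      congr 1
      ring
    · refine ⟨c - c', false, fun i => ?_⟩
      have H2 : ∀ j, y.1 j = x.1 (c - j) := H
      have H2' : ∀ j, z.1 j = y.1 (c' - j) := H'
      show z.1 i = x.1 (c - c' + i)
      rw [H2', H2]
      congr 1
      ring

def qtransform (n : ℕ) (x : IntQuad n) (w : ZMod 4) (ε : Bool) : IntQuad n := by
  refine ⟨fun i => x.1 (if ε then w - i else w + i), fun i => x.2.1 _, ?_⟩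
  refine Eq.trans ?_ x.2.2
  cases ε
  · exact Fintype.sum_equiv (Equiv.addLeft w) (fun i => x.1 (w + i)) x.1 (fun i => rfl)
  · exact Fintype.sum_equiv (Equiv.subLeft w) (fun i => x.1 (w - i)) x.1 (fun i => rfl)

lemma rel_qtransform (n : ℕ) (x : IntQuad n) (w : ZMod 4) (ε : Bool) :
    QuadRel n x (qtransform n x w ε) := ⟨w, ε, fun _ => rfl⟩

lemma exists_canonical (n : ℕ) (x : IntQuad n) :
    ∃ p, ∃ hp : p ∈ qS n, QuadRel n (toQuad n p (Finset.mem_of_mem_filter p hp)) x := by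
  have hx0 := x.2.1 0
  have hx1 := x.2.1 1
  have hx2 := x.2.1 2
  have hx3 := x.2.1 3
  have hsum : x.1 0 + x.1 1 + x.1 2 + x.1 3 = n := (sum_zmod4 x.1).symm.trans x.2.2
  have key : ∀ (w : ZMod 4) (ε : Bool) (p : ℕ × ℕ × ℕ × ℕ) (hp : p ∈ qS n),
      (∀ i, (toQuad n p (Finset.mem_of_mem_filter p hp)).1 i = (qtransform n x w ε).1 i) →
      ∃ p, ∃ hp : p ∈ qS n, QuadRel n (toQuad n p (Finset.mem_of_mem_filter p hp)) x := by
    intro w ε p hp heq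
    refine ⟨p, hp, ?_⟩
    have h2 : toQuad n p (Finset.mem_of_mem_filter p hp) = qtransform n x w ε :=
      Subtype.ext (funext heq)
    rw [h2]
    exact (quadRel_equiv n).symm (rel_qtransform n x w ε)
  by_cases h02 : x.1 0 ≤ x.1 2
  · by_cases h13 : x.1 1 ≤ x.1 3
    · by_cases hlex : x.1 0 < x.1 1 ∨ (x.1 0 = x.1 1 ∧ x.1 2 ≤ x.1 3)
      · refine key 0 false (x.1 0, x.1 1, x.1 2, x.1 3) ?_ (fun i => by fin_cases i <;> rfl)
        simp only [qS, Finset.mem_filter, mem_qBase]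
        omega
      · refine key 1 true (x.1 1, x.1 0, x.1 3, x.1 2) ?_ (fun i => by fin_cases i <;> rfl)
        simp only [qS, Finset.mem_filter, mem_qBase]
        omega
    · by_cases hlex : x.1 0 < x.1 3 ∨ (x.1 0 = x.1 3 ∧ x.1 2 ≤ x.1 1)
      · refine key 0 true (x.1 0, x.1 3, x.1 2, x.1 1) ?_ (fun i => by fin_cases i <;> rfl)
        simp only [qS, Finset.mem_filter, mem_qBase]
        omega
      · refine key 3 false (x.1 3, x.1 0, x.1 1, x.1 2) ?_ (fun i => by fin_cases i <;> rfl)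
        simp only [qS, Finset.mem_filter, mem_qBase]
        omega
  · by_cases h13 : x.1 1 ≤ x.1 3
    · by_cases hlex : x.1 2 < x.1 1 ∨ (x.1 2 = x.1 1 ∧ x.1 0 ≤ x.1 3)
      · refine key 2 true (x.1 2, x.1 1, x.1 0, x.1 3) ?_ (fun i => by fin_cases i <;> rfl)
        simp only [qS, Finset.mem_filter, mem_qBase]
        omega
      · refine key 1 false (x.1 1, x.1 2, x.1 3, x.1 0) ?_ (fun i => by fin_cases i <;> rfl)
        simp only [qS, Finset.mem_filter, mem_qBase]
        omega
    · by_cases hlex : x.1 2 < x.1 3 ∨ (x.1 2 = x.1 3 ∧ x.1 0 ≤ x.1 1)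
      · refine key 2 false (x.1 2, x.1 3, x.1 0, x.1 1) ?_ (fun i => by fin_cases i <;> rfl)
        simp only [qS, Finset.mem_filter, mem_qBase]
        omega
      · refine key 3 true (x.1 3, x.1 2, x.1 1, x.1 0) ?_ (fun i => by fin_cases i <;> rfl)
        simp only [qS, Finset.mem_filter, mem_qBase]
        omega

lemma canonical_inj (n : ℕ) (p q : ℕ × ℕ × ℕ × ℕ) (hp : p ∈ qS n) (hq : q ∈ qS n)
    (hpb : p ∈ qBase n) (hqb : q ∈ qBase n)
    (h : QuadRel n (toQuad n p hpb) (toQuad n q hqb)) : p = q := by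
  obtain ⟨pa, pb, pc, pd⟩ := p
  obtain ⟨qa, qb, qc, qd⟩ := q
  simp only [qS, Finset.mem_filter, mem_qBase] at hp hq
  obtain ⟨w, ε, H⟩ := h
  simp only [Prod.mk.injEq]
  cases ε <;> fin_cases w
  · have h0 : qa = pa := H 0
    have h1 : qb = pb := H 1
    have h2 : qc = pc := H 2
    have h3 : qd = pd := H 3
    omega
  · have h0 : qa = pb := H 0
    have h1 : qb = pc := H 1
    have h2 : qc = pd := H 2
    have h3 : qd = pa := H 3
    omega
  · have h0 : qa = pc := H 0
    have h1 : qb = pd := H 1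
    have h2 : qc = pa := H 2
    have h3 : qd = pb := H 3
    omega
  · have h0 : qa = pd := H 0
    have h1 : qb = pa := H 1
    have h2 : qc = pb := H 2
    have h3 : qd = pc := H 3
    omega
  · have h0 : qa = pa := H 0
    have h1 : qb = pd := H 1
    have h2 : qc = pc := H 2
    have h3 : qd = pb := H 3
    omega
  · have h0 : qa = pb := H 0
    have h1 : qb = pa := H 1
    have h2 : qc = pd := H 2
    have h3 : qd = pc := H 3
    omega
  · have h0 : qa = pc := H 0
    have h1 : qb = pb := H 1
    have h2 : qc = pa := H 2
    have h3 : qd = pd := H 3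
    omega
  · have h0 : qa = pd := H 0
    have h1 : qb = pc := H 1
    have h2 : qc = pb := H 2
    have h3 : qd = pa := H 3
    omega

lemma quadCount_eq (n : ℕ) : quadCount n = (qS n).card := by
  have hbij : Function.Bijective (fun p : {p // p ∈ qS n} =>
      Quot.mk (QuadRel n) (toQuad n p.1 (Finset.mem_of_mem_filter p.1 p.2))) := by
    constructor
    · rintro ⟨p, hp⟩ ⟨q, hq⟩ hpq
      simp only at hpq
      have hrel : QuadRel n (toQuad n p (Finset.mem_of_mem_filter p hp))
          (toQuad n q (Finset.mem_of_mem_filter q hq)) :=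
        ((quadRel_equiv n).eqvGen_iff).mp (Quot.eq.mp hpq)
      exact Subtype.ext (canonical_inj n p q hp hq _ _ hrel)
    · intro z
      induction z using Quot.ind with
      | _ x =>
        obtain ⟨p, hp, hrel⟩ := exists_canonical n x
        exact ⟨⟨p, hp⟩, Quot.sound hrel⟩
  rw [quadCount, ← Nat.card_eq_of_bijective _ hbij, Nat.card_eq_finsetCard]

/-- The number of inequivalent integer quadrilaterals with perimeter `n` is the
nearest integer to `(n³-3n²+20n)/96` (`n` even) or `(n³-7n)/96` (`n` odd). -/
theorem quadCount_round (n : ℕ) (hn : 0 < n) :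
    (quadCount n : ℤ)
      = if Even n then round (((n : ℚ) ^ 3 - 3 * n ^ 2 + 20 * n) / 96)
        else round (((n : ℚ) ^ 3 - 7 * n) / 96) := by
  have hq : (quadCount n : ℤ) = ((qS n).card : ℤ) := by rw [quadCount_eq]
  rcases (by omega : n % 4 = 0 ∨ n % 4 = 1 ∨ n % 4 = 2 ∨ n % 4 = 3) with h | h | h | h
  · obtain ⟨k, rfl⟩ : ∃ k, n = 4 * k := ⟨n / 4, by omega⟩
    have hk : 0 < k := by omega
    rw [if_pos (by exact Nat.even_iff.mpr (by omega))]
    have hv := qS_val_mod0 k hk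
    have hcast : (((4*k : ℕ) : ℚ) ^ 3 - 3 * ((4*k : ℕ) : ℚ) ^ 2 + 20 * ((4*k : ℕ) : ℚ)) / 96
        = ((((4*k:ℤ))^3 - 3*(4*k:ℤ)^2 + 20*(4*k:ℤ) : ℤ) : ℚ) / 96 := by push_cast; ring
    rw [hq, hcast, round_div96 _ ((qS (4*k)).card : ℤ) (by linarith) (by linarith)]
  · obtain ⟨k, rfl⟩ : ∃ k, n = 4 * k + 1 := ⟨n / 4, by omega⟩
    rw [if_neg (by simp only [Nat.even_iff]; omega)]
    have hv := qS_val_mod1 k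
    have hcast : (((4*k+1 : ℕ) : ℚ) ^ 3 - 7 * ((4*k+1 : ℕ) : ℚ)) / 96
        = ((((4*k+1:ℤ))^3 - 7*(4*k+1:ℤ) : ℤ) : ℚ) / 96 := by push_cast; ring
    rw [hq, hcast, round_div96 _ ((qS (4*k+1)).card : ℤ) (by linarith) (by linarith)]
  · obtain ⟨k, rfl⟩ : ∃ k, n = 4 * k + 2 := ⟨n / 4, by omega⟩
    rw [if_pos (by exact Nat.even_iff.mpr (by omega))]
    have hv := qS_val_mod2 k
    have hcast : (((4*k+2 : ℕ) : ℚ) ^ 3 - 3 * ((4*k+2 : ℕ) : ℚ) ^ 2 + 20 * ((4*k+2 : ℕ) : ℚ)) / 96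
        = ((((4*k+2:ℤ))^3 - 3*(4*k+2:ℤ)^2 + 20*(4*k+2:ℤ) : ℤ) : ℚ) / 96 := by push_cast; ring
    rw [hq, hcast, round_div96 _ ((qS (4*k+2)).card : ℤ) (by linarith) (by linarith)]
  · obtain ⟨k, rfl⟩ : ∃ k, n = 4 * k + 3 := ⟨n / 4, by omega⟩
    rw [if_neg (by simp only [Nat.even_iff]; omega)]
    have hv := qS_val_mod3 k
    have hcast : (((4*k+3 : ℕ) : ℚ) ^ 3 - 7 * ((4*k+3 : ℕ) : ℚ)) / 96
        = ((((4*k+3:ℤ))^3 - 7*(4*k+3:ℤ) : ℤ) : ℚ) / 96 := by push_cast; ring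
    rw [hq, hcast, round_div96 _ ((qS (4*k+3)).card : ℤ) (by linarith) (by linarith)]
end

section
/- For n≥3, the number of orbits of the cyclic group C_n (acting by rotations of coordinates) on the set of good binary n-tuples equals Σ_{d|n} φ(d)·2^{n/d}/n - 1 - 2^{⌊n/2⌋}. -/
/-- The cyclic relation on good binary `n`-tuples: two tuples are related iff one is a
cyclic rotation of the other. -/
def CyclicRel (n : ℕ) (a b : {a : ZMod n → Bool // GoodFun n a}) : Prop :=
  ∃ c : ZMod n, ∀ i, b.1 i = a.1 (c + i)

namespace CyclicOrbitsAux

open AddAction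

/-- The rotation action of `ZMod n` on binary `n`-tuples. -/
instance rotAction (n : ℕ) : AddAction (ZMod n) (ZMod n → Bool) where
  vadd c a := fun i => a (c + i)
  zero_vadd a := funext fun i => congrArg a (zero_add i)
  add_vadd x y a := funext fun i => congrArg a (by ring)

lemma vadd_def {n : ℕ} (c : ZMod n) (a : ZMod n → Bool) :
    c +ᵥ a = fun i => a (c + i) := rfl

lemma step {n : ℕ} (a : ZMod n → Bool) (e : ZMod n) (h : ∀ i, a (e + i) = a i) :
    ∀ (t : ℕ) (i : ZMod n), a (t • e + i) = a i := by
  intro t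
  induction t with
  | zero => intro i; simp
  | succ t ih =>
    intro i
    have he : ((t + 1) • e + i) = e + (t • e + i) := by rw [succ_nsmul]; ring
    rw [he, h, ih]

section Fixed

variable {n : ℕ}

lemma gcd_invariance [NeZero n] (c : ZMod n) (a : ZMod n → Bool)
    (ha : ∀ i, a (c + i) = a i) :
    ∀ i, a ((Nat.gcd c.val n : ZMod n) + i) = a i := by
  intro i
  have bez : (Nat.gcd c.val n : ℤ) = c.val * Nat.gcdA c.val n + n * Nat.gcdB c.val n :=
    Nat.gcd_eq_gcd_ab _ _
  set u : ZMod n := ((Nat.gcdA c.val n : ℤ) : ZMod n) with hu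
  have hcast : (Nat.gcd c.val n : ZMod n) = c * u := by
    have h2 := congrArg (fun z : ℤ => (z : ZMod n)) bez
    push_cast at h2
    rw [ZMod.natCast_self] at h2
    rw [ZMod.natCast_rightInverse c] at h2
    simpa [hu] using h2
  have hmul : c * u = u.val • c := by
    rw [nsmul_eq_mul, ZMod.natCast_rightInverse u, mul_comm]
  rw [hcast, hmul]
  exact step a c ha u.val i

/-- Tuples fixed by rotation by `c` correspond to tuples on `ZMod (gcd c.val n)`. -/
noncomputable def fixedEquiv [NeZero n] (c : ZMod n) :
    (fixedBy (ZMod n → Bool) c) ≃ (ZMod (Nat.gcd c.val n) → Bool) := by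
  set g := Nat.gcd c.val n with hgdef
  have hn0 : n ≠ 0 := NeZero.ne n
  have hgdvd : g ∣ n := Nat.gcd_dvd_right _ _
  have hg0 : g ≠ 0 := by
    intro h
    exact hn0 (Nat.eq_zero_of_gcd_eq_zero_right h)
  haveI : NeZero g := ⟨hg0⟩
  have hgle : g ≤ n := Nat.le_of_dvd (Nat.pos_of_ne_zero hn0) hgdvd
  refine
    { toFun := fun a j => a.1 ((j.val : ZMod n))
      invFun := fun f => ⟨fun i => f ((i.val : ZMod g)), ?_⟩
      left_inv := ?_
      right_inv := ?_ }
  · -- fixed by c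
    show c +ᵥ _ = _
    funext i
    show f (((c + i).val : ZMod g)) = f ((i.val : ZMod g))
    have key : ∀ x : ZMod n, ((x.val : ZMod g)) = ZMod.castHom hgdvd (ZMod g) x := by
      intro x
      rw [ZMod.castHom_apply, ZMod.natCast_val]
    rw [key, key, map_add]
    have hc0 : ZMod.castHom hgdvd (ZMod g) c = 0 := by
      rw [← key c]
      exact (ZMod.natCast_eq_zero_iff _ _).mpr (Nat.gcd_dvd_left _ _)
    rw [hc0, zero_add]
  · -- left inverse
    rintro ⟨a, hfix⟩
    ext i
    show a ((((i.val : ZMod g)).val : ZMod n)) = a i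
    have ha : ∀ i, a (c + i) = a i := fun j => congrFun hfix j
    have hginv := gcd_invariance c a ha
    have hrep : ((i.val : ZMod g)).val = i.val % g := ZMod.val_natCast _ _
    rw [hrep]
    have harg : (i.val / g) • ((g : ℕ) : ZMod n) + ((i.val % g : ℕ) : ZMod n) = i := by
      have h2 : g * (i.val / g) + i.val % g = i.val := Nat.div_add_mod _ _
      calc (i.val / g) • ((g : ℕ) : ZMod n) + ((i.val % g : ℕ) : ZMod n)
          = ((g * (i.val / g) + i.val % g : ℕ) : ZMod n) := by
            push_cast
            rw [nsmul_eq_mul]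
            ring
        _ = ((i.val : ℕ) : ZMod n) := by rw [h2]
        _ = i := ZMod.natCast_rightInverse i
    conv_rhs => rw [← harg]
    exact (step a _ hginv _ _).symm
  · -- right inverse
    intro f
    funext j
    show f ((((j.val : ZMod n)).val : ZMod g)) = f j
    have h1 : ((j.val : ZMod n)).val = j.val :=
      ZMod.val_cast_of_lt (lt_of_lt_of_le (ZMod.val_lt j) hgle)
    rw [h1, ZMod.natCast_rightInverse j]

lemma card_fixedBy [NeZero n] (c : ZMod n) :
    Nat.card (fixedBy (ZMod n → Bool) c) = 2 ^ Nat.gcd c.val n := by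
  have hn0 : n ≠ 0 := NeZero.ne n
  have hg0 : Nat.gcd c.val n ≠ 0 := fun h => hn0 (Nat.eq_zero_of_gcd_eq_zero_right h)
  haveI : NeZero (Nat.gcd c.val n) := ⟨hg0⟩
  rw [Nat.card_congr (fixedEquiv c)]
  rw [Nat.card_fun, Nat.card_eq_fintype_card (α := Bool), Nat.card_zmod]
  simp

end Fixed

section SumGcd

variable {n : ℕ}

lemma sum_gcd [NeZero n] (hn : 3 ≤ n) :
    ∑ c : ZMod n, 2 ^ Nat.gcd (ZMod.val c) n
      = ∑ d ∈ n.divisors, Nat.totient d * 2 ^ (n / d) := by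
  have hn0 : n ≠ 0 := NeZero.ne n
  classical
  have key : ∀ c : ZMod n, 2 ^ Nat.gcd (ZMod.val c) n = 2 ^ (n / addOrderOf c) := by
    intro c
    have h1 : addOrderOf c = n / Nat.gcd n c.val := by
      have h := ZMod.addOrderOf_coe c.val hn0
      rwa [ZMod.natCast_rightInverse c] at h
    rw [h1, Nat.gcd_comm]
    congr 1
    exact (Nat.div_div_self (Nat.gcd_dvd_left n c.val) hn0).symm
  have maps : ∀ c : ZMod n, c ∈ Finset.univ → addOrderOf c ∈ n.divisors := by
    intro c _
    rw [Nat.mem_divisors]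
    refine ⟨?_, hn0⟩
    have := addOrderOf_dvd_card (x := c)
    rwa [ZMod.card] at this
  calc ∑ c : ZMod n, 2 ^ Nat.gcd (ZMod.val c) n
      = ∑ c : ZMod n, 2 ^ (n / addOrderOf c) := Finset.sum_congr rfl fun c _ => key c
    _ = ∑ d ∈ n.divisors, ∑ c ∈ Finset.univ.filter (fun c : ZMod n => addOrderOf c = d),
          2 ^ (n / addOrderOf c) :=
        (Finset.sum_fiberwise_of_maps_to maps _).symm
    _ = ∑ d ∈ n.divisors, Nat.totient d * 2 ^ (n / d) := by
        refine Finset.sum_congr rfl fun d hd => ?_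
        have hdvd : d ∣ n := (Nat.mem_divisors.mp hd).1
        have hcard :
            (Finset.univ.filter (fun c : ZMod n => addOrderOf c = d)).card = Nat.totient d := by
          have h := IsAddCyclic.card_addOrderOf_eq_totient (α := ZMod n)
            (d := d) (by rwa [ZMod.card])
          convert h using 2
        calc ∑ c ∈ Finset.univ.filter (fun c : ZMod n => addOrderOf c = d),
              2 ^ (n / addOrderOf c)
            = ∑ _c ∈ Finset.univ.filter (fun c : ZMod n => addOrderOf c = d), 2 ^ (n / d) := by
              refine Finset.sum_congr rfl fun c hc => ?_
              rw [(Finset.mem_filter.mp hc).2]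
          _ = Nat.totient d * 2 ^ (n / d) := by
              rw [Finset.sum_const, smul_eq_mul, hcard]

end SumGcd

section Burnside

variable {n : ℕ}

lemma burnside (hn : 3 ≤ n) :
    Nat.card (Quotient (orbitRel (ZMod n) (ZMod n → Bool))) * n
      = ∑ d ∈ n.divisors, Nat.totient d * 2 ^ (n / d) := by
  have hn0 : n ≠ 0 := by omega
  haveI : NeZero n := ⟨hn0⟩
  classical
  haveI : ∀ c : ZMod n, Fintype (fixedBy (ZMod n → Bool) c) := fun c => Fintype.ofFinite _
  haveI : Fintype (Quotient (orbitRel (ZMod n) (ZMod n → Bool))) := Fintype.ofFinite _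
  have h := AddAction.sum_card_fixedBy_eq_card_orbits_mul_card_addGroup
    (G := ZMod n) (X := ZMod n → Bool)
  rw [ZMod.card] at h
  have h2 : ∑ c : ZMod n, Fintype.card (fixedBy (ZMod n → Bool) c)
      = ∑ c : ZMod n, 2 ^ Nat.gcd (ZMod.val c) n := by
    refine Finset.sum_congr rfl fun c _ => ?_
    rw [← Nat.card_eq_fintype_card, card_fixedBy]
  rw [h2] at h
  rw [Nat.card_eq_fintype_card, ← h]
  exact sum_gcd hn

end Burnside

section Bad

variable {n : ℕ}

/-- A tuple is bad if it has a one but is not good. -/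
def Bad (n : ℕ) (a : ZMod n → Bool) : Prop :=
  (∃ i, a i = true) ∧ ¬ GoodFun n a

/-- The cyclic relation on bad tuples. -/
def BadRel (n : ℕ) (a b : {a : ZMod n → Bool // Bad n a}) : Prop :=
  ∃ c : ZMod n, ∀ i, b.1 i = a.1 (c + i)

/-- Canonical representatives of bad orbits: position `0` is one, positions
`1, ..., ⌈n/2⌉ - 1` are zero. -/
def Canon (n : ℕ) (a : ZMod n → Bool) : Prop :=
  a 0 = true ∧ ∀ i : ZMod n, 0 < i.val → i.val < n - n / 2 → a i = false

lemma canon_bad (hn : 3 ≤ n) {a : ZMod n → Bool} (hc : Canon n a) : Bad n a := by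
  have hn0 : n ≠ 0 := by omega
  haveI : NeZero n := ⟨hn0⟩
  refine ⟨⟨0, hc.1⟩, ?_⟩
  rintro ⟨-, hgap⟩
  obtain ⟨k, hk0, hk2, htrue⟩ := hgap 0 hc.1
  rw [zero_add] at htrue
  have hkval : ((k : ZMod n)).val = k := ZMod.val_cast_of_lt (by omega)
  have := hc.2 (k : ZMod n) (by omega) (by omega)
  rw [this] at htrue
  exact Bool.false_ne_true htrue

lemma bad_exists_canon (hn : 3 ≤ n) {a : ZMod n → Bool} (hb : Bad n a) :
    ∃ c : ZMod n, Canon n (fun i => a (c + i)) := by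
  have hn0 : n ≠ 0 := by omega
  haveI : NeZero n := ⟨hn0⟩
  obtain ⟨hex, hng⟩ := hb
  have : ∃ i, a i = true ∧ ∀ k : ℕ, 0 < k → 2 * k < n → ¬ a (i + (k : ZMod n)) = true := by
    by_contra h
    push_neg at h
    exact hng ⟨hex, fun i hi => h i hi⟩
  obtain ⟨i, hi, hgap⟩ := this
  refine ⟨i, ?_, ?_⟩
  · show a (i + 0) = true
    rwa [add_zero]
  · intro j hj1 hj2
    have hj : ((j.val : ℕ) : ZMod n) = j := ZMod.natCast_rightInverse j
    have := hgap j.val hj1 (by omega)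
    rw [hj] at this
    simpa using this

lemma canon_unique (hn : 3 ≤ n) {a b : ZMod n → Bool} (ha : Canon n a) (hb : Canon n b)
    (c : ZMod n) (h : ∀ i, b i = a (c + i)) : b = a := by
  have hn0 : n ≠ 0 := by omega
  haveI : NeZero n := ⟨hn0⟩
  set m := n - n / 2 with hm
  have htrue_a : ∀ x : ZMod n, a x = true → x.val = 0 ∨ m ≤ x.val := by
    intro x hx
    by_contra hcon
    push_neg at hcon
    rw [ha.2 x (Nat.pos_of_ne_zero hcon.1) hcon.2] at hx
    exact Bool.false_ne_true hx
  have htrue_b : ∀ x : ZMod n, b x = true → x.val = 0 ∨ m ≤ x.val := by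
    intro x hx
    by_contra hcon
    push_neg at hcon
    rw [hb.2 x (Nat.pos_of_ne_zero hcon.1) hcon.2] at hx
    exact Bool.false_ne_true hx
  have hac : a c = true := by
    have := hb.1
    rw [h 0, add_zero] at this
    exact this
  rcases htrue_a c hac with hc0 | hcm
  · -- c = 0
    have : c = 0 := (ZMod.val_eq_zero c).mp hc0
    subst this
    funext i
    rw [h i, zero_add]
  · -- c.val ≥ m, deduce n even, c.val = n / 2
    have hcne : c ≠ 0 := by
      intro h0
      rw [h0, ZMod.val_zero] at hcm
      omega
    have hbnegc : b (-c) = true := by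
      rw [h (-c), add_neg_cancel]
      exact ha.1
    have hnegc_ne : (-c) ≠ 0 := neg_ne_zero.mpr hcne
    have hnegval : (-c).val = n - c.val := by
      rw [ZMod.neg_val, if_neg hcne]
    rcases htrue_b (-c) hbnegc with h0 | hm2
    · exact absurd ((ZMod.val_eq_zero (-c)).mp h0) hnegc_ne
    · rw [hnegval] at hm2
      have hcval_lt : c.val < n := ZMod.val_lt c
      -- m ≤ c.val and m ≤ n - c.val gives c.val = n/2 and n even
      have hceq : c.val = n / 2 ∧ n % 2 = 0 := by omega
      -- characterize trues of a
      have hchar : ∀ x : ZMod n, a x = true ↔ (x = 0 ∨ x = c) := by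
        intro x
        constructor
        · intro hx
          rcases htrue_a x hx with h0 | hxm
          · exact Or.inl ((ZMod.val_eq_zero x).mp h0)
          · -- x.val ≥ m = n/2 ; consider b (x - c)
            have hbxc : b (x - c) = true := by
              rw [h (x - c)]
              have : c + (x - c) = x := by ring
              rw [this]; exact hx
            have hxval_lt : x.val < n := ZMod.val_lt x
            have hc'' : c = ((n / 2 : ℕ) : ZMod n) := by
              rw [← hceq.1]
              exact (ZMod.natCast_rightInverse c).symm
            have hxc_eq : x - c = (((x.val - n / 2 : ℕ)) : ZMod n) := by
              rw [Nat.cast_sub (by omega), ZMod.natCast_rightInverse x]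
              rw [← hc'']
            have hxcval : (x - c).val = x.val - n / 2 := by
              rw [hxc_eq, ZMod.val_natCast, Nat.mod_eq_of_lt (by omega)]
            rcases htrue_b (x - c) hbxc with h0 | hxm2
            · right
              have : x - c = 0 := (ZMod.val_eq_zero _).mp h0
              have : x = c := by
                have := sub_eq_zero.mp this
                exact this
              exact this
            · rw [hxcval] at hxm2
              omega
        · rintro (rfl | rfl)
          · exact ha.1
          · exact hac
      -- conclude b = a
      have hcc : c + c = 0 := by
        have hc' : c = ((n / 2 : ℕ) : ZMod n) := by
          rw [← hceq.1]; exact (ZMod.natCast_rightInverse c).symm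
        rw [hc', ← Nat.cast_add]
        have : n / 2 + n / 2 = n := by omega
        rw [this, ZMod.natCast_self]
      funext x
      have hbx : b x = a (c + x) := h x
      rw [hbx]
      have hiff : a (c + x) = true ↔ a x = true := by
        rw [hchar (c + x), hchar x]
        constructor
        · rintro (h0 | hcx)
          · refine Or.inr ?_
            have hx : c + x = c + c := by rw [h0, hcc]
            exact add_left_cancel hx
          · refine Or.inl ?_
            have hx : c + x = c + 0 := by rw [hcx, add_zero]
            exact add_left_cancel hx
        · rintro (rfl | rfl)
          · exact Or.inr (by rw [add_zero])
          · exact Or.inl hcc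
      cases hax : a x with
      | true => rw [hiff.mpr hax]
      | false =>
        cases hacx : a (c + x) with
        | true => rw [hax] at hiff; simpa using hiff.mp hacx
        | false => rfl
end Bad


section BadCount

variable {n : ℕ}

lemma badRel_equivalence (n : ℕ) : Equivalence (BadRel n) := by
  constructor
  · intro s; exact ⟨0, fun i => by rw [zero_add]⟩
  · rintro s t ⟨c, hc⟩
    refine ⟨-c, fun i => ?_⟩
    rw [hc (-c + i)]
    congr 1
    ring
  · rintro s t u ⟨c, hc⟩ ⟨c', hc'⟩
    refine ⟨c + c', fun i => ?_⟩
    rw [hc' i, hc (c' + i)]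
    congr 1
    ring

/-- Canonical tuples are parametrized by the free upper `n/2` positions. -/
noncomputable def canonEquiv (hn : 3 ≤ n) :
    {a : ZMod n → Bool // Canon n a} ≃ (Fin (n / 2) → Bool) := by
  have hn0 : n ≠ 0 := by omega
  haveI : NeZero n := ⟨hn0⟩
  refine
    { toFun := fun s j => s.1 (((n - n / 2 + j.val : ℕ) : ZMod n))
      invFun := fun f => ⟨fun i =>
        if h : n - n / 2 ≤ i.val then
          f ⟨i.val - (n - n / 2), by have := ZMod.val_lt i; omega⟩
        else decide (i.val = 0), ?_, ?_⟩
      left_inv := ?_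
      right_inv := ?_ }
  · -- value at 0 is true
    beta_reduce
    rw [dif_neg (show ¬ n - n / 2 ≤ (0 : ZMod n).val by rw [ZMod.val_zero]; omega)]
    simp [ZMod.val_zero]
  · -- middle values are false
    intro i h1 h2
    beta_reduce
    rw [dif_neg (by omega)]
    simp only [decide_eq_false_iff_not]
    omega
  · -- left inverse
    rintro ⟨a, hca⟩
    apply Subtype.ext
    funext i
    simp only
    by_cases h : n - n / 2 ≤ i.val
    · rw [dif_pos h]
      have harg : n - n / 2 + (i.val - (n - n / 2)) = i.val := by omega
      show a (((n - n / 2 + (i.val - (n - n / 2)) : ℕ) : ZMod n)) = a i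
      rw [harg, ZMod.natCast_rightInverse i]
    · rw [dif_neg h]
      by_cases h0 : i.val = 0
      · have : i = 0 := (ZMod.val_eq_zero i).mp h0
        subst this
        rw [hca.1]
        simp [h0]
      · rw [hca.2 i (Nat.pos_of_ne_zero h0) (by omega)]
        simp [h0]
  · -- right inverse
    intro f
    funext j
    simp only
    have hval : (((n - n / 2 + j.val : ℕ) : ZMod n)).val = n - n / 2 + j.val :=
      ZMod.val_cast_of_lt (by have := j.isLt; omega)
    rw [dif_pos (by omega)]
    congr 1
    apply Fin.ext
    simp only [hval]
    omega

lemma card_badQuot (hn : 3 ≤ n) :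
    Nat.card (Quot (BadRel n)) = 2 ^ (n / 2) := by
  have hn0 : n ≠ 0 := by omega
  haveI : NeZero n := ⟨hn0⟩
  have hbij : Function.Bijective
      (fun s : {a : ZMod n → Bool // Canon n a} =>
        Quot.mk (BadRel n) ⟨s.1, canon_bad hn s.2⟩) := by
    constructor
    · rintro ⟨a, hca⟩ ⟨b, hcb⟩ hab
      simp only at hab
      have h2 := Quot.eq.mp hab
      rw [(badRel_equivalence n).eqvGen_eq] at h2
      obtain ⟨c, hc⟩ := h2
      exact Subtype.ext (canon_unique hn hca hcb c hc).symm
    · refine Quot.ind ?_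
      rintro ⟨a, hb⟩
      obtain ⟨c, hc⟩ := bad_exists_canon hn hb
      refine ⟨⟨fun i => a (c + i), hc⟩, ?_⟩
      apply Quot.sound
      refine ⟨-c, fun i => ?_⟩
      show a i = a (c + (-c + i))
      congr 1
      ring
  rw [← Nat.card_congr (Equiv.ofBijective _ hbij), Nat.card_congr (canonEquiv hn)]
  rw [Nat.card_fun]
  simp

end BadCount

section Partition

variable {n : ℕ}

lemma good_rot (c : ZMod n) {a : ZMod n → Bool} (h : GoodFun n a) :
    GoodFun n (fun i => a (c + i)) := by
  obtain ⟨⟨i0, hi0⟩, hgap⟩ := h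
  refine ⟨⟨i0 - c, ?_⟩, ?_⟩
  · show a (c + (i0 - c)) = true
    have he : c + (i0 - c) = i0 := by ring
    rw [he]
    exact hi0
  · intro i hi
    have hi' : a (c + i) = true := hi
    obtain ⟨k, h1, h2, h3⟩ := hgap (c + i) hi'
    refine ⟨k, h1, h2, ?_⟩
    show a (c + (i + (k : ZMod n))) = true
    have he : c + (i + (k : ZMod n)) = c + i + (k : ZMod n) := by ring
    rw [he]
    exact h3

lemma good_vadd_iff (g : ZMod n) (b : ZMod n → Bool) :
    GoodFun n (g +ᵥ b) ↔ GoodFun n b := by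
  constructor
  · intro h
    have h2 := good_rot (-g) h
    have he : (fun i => (g +ᵥ b) (-g + i)) = b := by
      funext i
      show b (g + (-g + i)) = b i
      congr 1
      ring
    rwa [he] at h2
  · intro h
    exact good_rot g h

lemma exists_vadd_iff (g : ZMod n) (b : ZMod n → Bool) :
    (∃ i, (g +ᵥ b) i = true) ↔ ∃ i, b i = true := by
  constructor
  · rintro ⟨i, hi⟩
    exact ⟨g + i, hi⟩
  · rintro ⟨i, hi⟩
    refine ⟨-g + i, ?_⟩
    show b (g + (-g + i)) = true
    have he : g + (-g + i) = i := by ring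
    rw [he]
    exact hi

noncomputable def partEquiv (hn : 3 ≤ n) :
    Quotient (orbitRel (ZMod n) (ZMod n → Bool)) ≃
      (Quot (CyclicRel n) ⊕ (Quot (BadRel n) ⊕ Unit)) := by
  classical
  refine
    { toFun := Quotient.lift (fun a : ZMod n → Bool =>
        if hg : GoodFun n a then Sum.inl (Quot.mk _ (⟨a, hg⟩ : {a // GoodFun n a}))
        else if he : ∃ i, a i = true then
          Sum.inr (Sum.inl (Quot.mk _ (⟨a, he, hg⟩ : {a // Bad n a})))
        else Sum.inr (Sum.inr Unit.unit)) ?_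
      invFun := Sum.elim
        (Quot.lift (fun s : {a // GoodFun n a} =>
          Quotient.mk (orbitRel (ZMod n) (ZMod n → Bool)) s.1) ?_)
        (Sum.elim
          (Quot.lift (fun s : {a // Bad n a} =>
            Quotient.mk (orbitRel (ZMod n) (ZMod n → Bool)) s.1) ?_)
          (fun _ => Quotient.mk (orbitRel (ZMod n) (ZMod n → Bool)) (fun _ => false)))
      left_inv := ?_
      right_inv := ?_ }
  · -- well-definedness of toFun
    intro a b hab
    obtain ⟨g, rfl⟩ : ∃ g : ZMod n, g +ᵥ b = a := hab
    beta_reduce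
    by_cases hg : GoodFun n b
    · rw [dif_pos ((good_vadd_iff g b).mpr hg), dif_pos hg]
      congr 1
      apply Quot.sound
      refine ⟨-g, fun i => ?_⟩
      show b i = b (g + (-g + i))
      congr 1
      ring
    · rw [dif_neg (fun h => hg ((good_vadd_iff g b).mp h)), dif_neg hg]
      by_cases he : ∃ i, b i = true
      · rw [dif_pos ((exists_vadd_iff g b).mpr he), dif_pos he]
        congr 2
        apply Quot.sound
        refine ⟨-g, fun i => ?_⟩
        show b i = b (g + (-g + i))
        congr 1
        ring
      · rw [dif_neg (fun h => he ((exists_vadd_iff g b).mp h)), dif_neg he]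
  · -- well-definedness on good classes
    rintro s t ⟨c, hc⟩
    apply Quotient.sound
    refine ⟨-c, funext fun i => ?_⟩
    show t.1 (-c + i) = s.1 i
    rw [hc (-c + i)]
    congr 1
    ring
  · -- well-definedness on bad classes
    rintro s t ⟨c, hc⟩
    apply Quotient.sound
    refine ⟨-c, funext fun i => ?_⟩
    show t.1 (-c + i) = s.1 i
    rw [hc (-c + i)]
    congr 1
    ring
  · -- left inverse
    intro q
    induction q using Quotient.ind with
    | _ a =>
      by_cases hg : GoodFun n a
      · simp only [Quotient.lift_mk, dif_pos hg, Sum.elim_inl]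
      · by_cases he : ∃ i, a i = true
        · simp only [Quotient.lift_mk, dif_neg hg, dif_pos he, Sum.elim_inr, Sum.elim_inl]
        · simp only [Quotient.lift_mk, dif_neg hg, dif_neg he, Sum.elim_inr]
          have : a = fun _ => false := by
            funext i
            cases hai : a i with
            | false => rfl
            | true => exact absurd ⟨i, hai⟩ he
          rw [this]
  · -- right inverse
    rintro (q | q | ⟨⟩)
    · induction q using Quot.ind with
      | _ s =>
        simp only [Sum.elim_inl, Quotient.lift_mk, dif_pos s.2]
    · induction q using Quot.ind with
      | _ s =>
        simp only [Sum.elim_inr, Sum.elim_inl, Quotient.lift_mk, dif_neg s.2.2,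
          dif_pos s.2.1]
    · have hg : ¬ GoodFun n (fun _ : ZMod n => false) := by
        rintro ⟨⟨i, hi⟩, -⟩
        exact Bool.false_ne_true hi
      have he : ¬ ∃ i : ZMod n, (fun _ : ZMod n => false) i = true := by
        rintro ⟨i, hi⟩
        exact Bool.false_ne_true hi
      simp only [Sum.elim_inr, Quotient.lift_mk, dif_neg hg, dif_neg he]

lemma card_partition (hn : 3 ≤ n) :
    Nat.card (Quotient (orbitRel (ZMod n) (ZMod n → Bool)))
      = Nat.card (Quot (CyclicRel n)) + (Nat.card (Quot (BadRel n)) + 1) := by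
  haveI : NeZero n := ⟨by omega⟩
  rw [Nat.card_congr (partEquiv hn), Nat.card_sum, Nat.card_sum]
  simp

end Partition

end CyclicOrbitsAux

/-- For `n ≥ 3`, the number of orbits of the cyclic group `C_n` on good binary
`n`-tuples equals `(Σ_{d∣n} φ(d)·2^{n/d})/n - 1 - 2^⌊n/2⌋`. -/
theorem cyclic_orbits (n : ℕ) (hn : 3 ≤ n) :
    (Nat.card (Quot (CyclicRel n)) : ℚ)
      = (∑ d ∈ n.divisors, (Nat.totient d : ℚ) * 2 ^ (n / d)) / n
        - 1 - 2 ^ (n / 2) := by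
  haveI : NeZero n := ⟨by omega⟩
  have hb := CyclicOrbitsAux.burnside (n := n) hn
  have hp := CyclicOrbitsAux.card_partition (n := n) hn
  have hbad := CyclicOrbitsAux.card_badQuot (n := n) hn
  rw [hbad] at hp
  have hn0 : (n : ℚ) ≠ 0 := Nat.cast_ne_zero.mpr (by omega)
  set T := Nat.card (Quotient (AddAction.orbitRel (ZMod n) (ZMod n → Bool))) with hTdef
  set NG := Nat.card (Quot (CyclicRel n)) with hNGdef
  have hQ : (T : ℚ) * n = ∑ d ∈ n.divisors, (Nat.totient d : ℚ) * 2 ^ (n / d) := by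
    have h2 := congrArg (fun k : ℕ => (k : ℚ)) hb
    push_cast at h2
    exact h2
  have hT : (T : ℚ) = (NG : ℚ) + 2 ^ (n / 2) + 1 := by
    rw [hp]
    push_cast
    ring
  have hTS : (T : ℚ) = (∑ d ∈ n.divisors, (Nat.totient d : ℚ) * 2 ^ (n / d)) / n := by
    rw [← hQ, mul_div_cancel_right₀ _ hn0]
  rw [← hTS]
  rw [hT]
  ring
end
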